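/- arXiv:2107.07747 — 8 statements merged into one kernel-verified Lean document; each statement's English description precedes it below -/
import Mathlib

section
/- Let X be a separable metrizable space of cardinality continuum that is 𝔠-crowded and such that every 𝔠-crowded subspace of X is rigid. Then X cannot be written as a countable union of homogeneous subspaces. -/
/-!
Suppose `X = ⋃ₙ Yₙ` with every `Yₙ` homogeneous. Since `𝔠` has uncountable cofinality, some
piece `T = Yₙ` has cardinality `𝔠`. Let `Z` be the set of points of `T` all of whose
neighbourhoods in `T` have cardinality `𝔠`. As `T` is second countable, `T \ Z` is covered by
countably many basic open sets of cardinality `< 𝔠`, so it is small; hence `Z` is `𝔠`-crowded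
and thus rigid. But `Z` is defined topologically, so every self-homeomorphism of `T` maps `Z`
onto itself, and a homeomorphism of the homogeneous space `T` moving one point of `Z` to another
restricts to a non-identity homeomorphism of `Z`.
-/

/-- A space is homogeneous if for all `x, y` there is a self-homeomorphism sending `x` to `y`. -/
def IsHomogeneousSpace (X : Type*) [TopologicalSpace X] : Prop :=
  ∀ x y : X, ∃ h : X ≃ₜ X, h x = y

/-- A space is `𝔠`-crowded if it is nonempty and every non-empty open subset has
cardinality continuum. -/
def CCrowdedSpace (X : Type*) [TopologicalSpace X] : Prop :=
  Nonempty X ∧ ∀ U : Set X, IsOpen U → U.Nonempty → Cardinal.mk U = Cardinal.continuum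

/-- A space is rigid if it has at least two points and its only self-homeomorphism is
the identity. -/
def RigidSpace (X : Type*) [TopologicalSpace X] : Prop :=
  (∃ a b : X, a ≠ b) ∧ ∀ h : X ≃ₜ X, ∀ x : X, h x = x

open Cardinal Set Topology TopologicalSpace

universe u

theorem Cardinal.aleph0_lt_cof_continuum : ℵ₀ < (𝔠).ord.cof := by
  simpa [two_power_aleph0] using lt_cof_ord_power le_rfl one_lt_two

theorem Cardinal.mk_sUnion_lt_of_countable {α : Type u} {κ : Cardinal.{u}}
    (hκ : ℵ₀ < κ.ord.cof) {A : Set (Set α)} (hA : A.Countable) (h : ∀ s ∈ A, #s < κ) :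
    #(⋃₀ A) < κ := by
  have hA' : #A < κ.ord.cof := (le_aleph0_iff_set_countable.2 hA).trans_lt hκ
  have hκ₀ : ℵ₀ ≤ κ := hκ.le.trans (Ordinal.cof_ord_le κ)
  exact (mk_sUnion_le A).trans_lt <| mul_lt_of_lt hκ₀ (hA'.trans_le (Ordinal.cof_ord_le κ))
    (iSup_lt_of_lt_cof_ord hA' fun s => h s s.2)

theorem exists_mk_eq_of_iUnion_eq_univ {X : Type u} {κ : Cardinal.{u}} (hκ : ℵ₀ < κ.ord.cof)
    (hX : #X = κ) {Y : ℕ → Set X} (hY : ⋃ n, Y n = Set.univ) : ∃ n, #(Y n) = κ := by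
  by_contra! hsmall
  have hlt : ∀ s ∈ range Y, #s < κ := by
    rintro _ ⟨n, rfl⟩
    exact (hX ▸ mk_set_le (Y n)).lt_of_ne (hsmall n)
  have := mk_sUnion_lt_of_countable hκ (countable_range Y) hlt
  rw [sUnion_range, hY, mk_univ, hX] at this
  exact this.false

theorem CCrowdedSpace.of_homeomorph {X Y : Type u} [TopologicalSpace X] [TopologicalSpace Y]
    (e : X ≃ₜ Y) (h : CCrowdedSpace X) : CCrowdedSpace Y := by
  obtain ⟨⟨x⟩, hopen⟩ := h
  refine ⟨⟨e x⟩, fun U hU hne => ?_⟩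
  rw [← mk_preimage_equiv e.toEquiv U]
  exact hopen _ (hU.preimage e.continuous) (hne.preimage e.surjective)

theorem RigidSpace.of_homeomorph {X Y : Type*} [TopologicalSpace X] [TopologicalSpace Y]
    (e : X ≃ₜ Y) (h : RigidSpace X) : RigidSpace Y := by
  obtain ⟨⟨a, b, hab⟩, hid⟩ := h
  refine ⟨⟨e a, e b, e.injective.ne hab⟩, fun f y => ?_⟩
  simpa using congrArg e (hid (e.trans (f.trans e.symm)) (e.symm y))

theorem IsHomogeneousSpace.not_rigidSpace_of_invariant {T : Type*} [TopologicalSpace T]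
    (hT : IsHomogeneousSpace T) (Z : Set T) (hZ : ∀ (e : T ≃ₜ T) (x : T), x ∈ Z ↔ e x ∈ Z) :
    ¬ RigidSpace Z := by
  rintro ⟨⟨a, b, hab⟩, hid⟩
  obtain ⟨e, he⟩ := hT a b
  have hfix : e a = a := congrArg Subtype.val (hid (e.subtype (hZ e)) a)
  exact hab (Subtype.ext (hfix.symm.trans he))

def condensationPoints (κ : Cardinal.{u}) (T : Type u) [TopologicalSpace T] : Set T :=
  {x | ∀ U : Set T, IsOpen U → x ∈ U → κ ≤ #U}

section condensationPoints

variable {T : Type u} [TopologicalSpace T] {κ : Cardinal.{u}}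

theorem Homeomorph.map_mem_condensationPoints (e : T ≃ₜ T) {x : T}
    (hx : x ∈ condensationPoints κ T) : e x ∈ condensationPoints κ T := fun U hU hxU =>
  (hx _ (hU.preimage e.continuous) hxU).trans (mk_preimage_of_injective e U e.injective)

theorem Homeomorph.mem_condensationPoints_iff (e : T ≃ₜ T) {x : T} :
    x ∈ condensationPoints κ T ↔ e x ∈ condensationPoints κ T :=
  ⟨e.map_mem_condensationPoints, fun h => by
    simpa using e.symm.map_mem_condensationPoints h⟩

theorem mk_compl_condensationPoints_lt [SecondCountableTopology T] (hκ : ℵ₀ < κ.ord.cof) :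
    #((condensationPoints κ T)ᶜ : Set T) < κ := by
  obtain ⟨B, hBc, -, hB⟩ := exists_countable_basis T
  have hcover : (condensationPoints κ T)ᶜ ⊆ ⋃₀ {U ∈ B | #U < κ} := by
    intro x hx
    simp only [condensationPoints, mem_compl_iff, mem_ofPred_eq, not_forall, not_le] at hx
    obtain ⟨U, hU, hxU, hUsmall⟩ := hx
    obtain ⟨W, hWB, hxW, hWU⟩ := hB.exists_subset_of_mem_open hxU hU
    exact ⟨W, ⟨hWB, (mk_le_mk_of_subset hWU).trans_lt hUsmall⟩, hxW⟩
  exact (mk_le_mk_of_subset hcover).trans_lt <|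
    mk_sUnion_lt_of_countable hκ (hBc.mono (sep_subset _ _)) fun U hU => hU.2

theorem le_mk_inter_condensationPoints [SecondCountableTopology T] (hκ : ℵ₀ < κ.ord.cof)
    {x : T} (hx : x ∈ condensationPoints κ T) {V : Set T} (hV : IsOpen V) (hxV : x ∈ V) :
    κ ≤ #(V ∩ condensationPoints κ T : Set T) := by
  by_contra! hsmall
  have hsplit : V ⊆ (V ∩ condensationPoints κ T) ∪ (condensationPoints κ T)ᶜ := fun y hy => by
    by_cases h : y ∈ condensationPoints κ T
    exacts [Or.inl ⟨hy, h⟩, Or.inr h]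
  have : #V < κ := (mk_le_mk_of_subset hsplit).trans_lt <| (mk_union_le _ _).trans_lt <|
    add_lt_of_lt (hκ.le.trans (Ordinal.cof_ord_le κ)) hsmall (mk_compl_condensationPoints_lt hκ)
  exact (hx V hV hxV).not_gt this

theorem ccrowdedSpace_condensationPoints [SecondCountableTopology T] (hT : #T = 𝔠) :
    CCrowdedSpace (condensationPoints 𝔠 T) := by
  have hsmall := mk_compl_condensationPoints_lt (T := T) aleph0_lt_cof_continuum
  refine ⟨?_, fun U hU hne => le_antisymm ((mk_set_le U).trans (hT ▸ mk_set_le _)) ?_⟩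
  · rw [nonempty_coe_sort, nonempty_iff_ne_empty]
    intro hempty
    rw [hempty, compl_empty, mk_univ, hT] at hsmall
    exact hsmall.false
  · obtain ⟨V, hV, rfl⟩ := isOpen_induced_iff.1 hU
    obtain ⟨⟨x, hx⟩, hxV⟩ := hne
    rw [← mk_image_eq Subtype.val_injective, Subtype.image_preimage_coe, inter_comm]
    exact le_mk_inter_condensationPoints aleph0_lt_cof_continuum hx hV hxV

end condensationPoints

theorem statement1_general (X : Type*) [TopologicalSpace X] [TopologicalSpace.MetrizableSpace X]
    [TopologicalSpace.SeparableSpace X]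
    (hcard : Cardinal.mk X = Cardinal.continuum)
    (hrigid : ∀ S : Set X, CCrowdedSpace S → RigidSpace S) :
    ¬ ∃ Y : ℕ → Set X, (⋃ n, Y n) = Set.univ ∧ ∀ n, IsHomogeneousSpace (Y n) := by
  rintro ⟨Y, hcover, hhom⟩
  let := metrizableSpaceMetric X
  have := UniformSpace.secondCountable_of_separable X
  obtain ⟨n, hn⟩ := exists_mk_eq_of_iUnion_eq_univ aleph0_lt_cof_continuum hcard hcover
  let Z := condensationPoints 𝔠 (Y n)
  let e : Z ≃ₜ range (fun z : Z => (z : X)) :=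
    (IsEmbedding.subtypeVal.comp IsEmbedding.subtypeVal).toHomeomorph
  have hZ : CCrowdedSpace Z := ccrowdedSpace_condensationPoints hn
  exact (hhom n).not_rigidSpace_of_invariant Z (fun f _ => f.mem_condensationPoints_iff)
    ((hrigid _ (hZ.of_homeomorph e)).of_homeomorph e.symm)

/-- A 𝔠-hereditarily rigid separable metrizable space of cardinality 𝔠 is not σ-homogeneous. -/
theorem statement1 (X : Type*) [TopologicalSpace X] [TopologicalSpace.MetrizableSpace X]
    [TopologicalSpace.SeparableSpace X]
    (hcard : Cardinal.mk X = Cardinal.continuum)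
    (hcrowded : CCrowdedSpace X)
    (hrigid : ∀ S : Set X, CCrowdedSpace S → RigidSpace S) :
    ¬ ∃ Y : ℕ → Set X, (⋃ n, Y n) = Set.univ ∧ ∀ n, IsHomogeneousSpace (Y n) :=
  statement1_general X hcard hrigid
end

section
/- Assume every subset of every Polish space has the Baire property. Let Z be a Polish space and let X be a dense subspace of Z that is a Baire space. Then X is comeager in Z. -/
/-!
Write `Xᶜ` as an open set `V` modulo a meagre set. Then `V ∩ X` is meagre in `Z`, and since `X`
is dense, meagre subsets of `Z` trace meagre subsets on `X`; so `V ∩ X` is a meagre open subset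
of the Baire space `X`, hence empty, and by density `V = ∅`. Thus `Xᶜ` is meagre.
-/

open Filter Set

variable {Z : Type*} [TopologicalSpace Z] {X : Set Z}

lemma Dense.dense_preimage_val_of_isOpen (hX : Dense X) {t : Set Z} (ht : IsOpen t)
    (htd : Dense t) : Dense ((↑) ⁻¹' t : Set X) := by
  rw [Subtype.dense_iff, Subtype.image_preimage_coe, inter_comm]
  exact fun x _ ↦ htd.inter_of_isOpen_left hX ht x

lemma Dense.tendsto_residual_val (hX : Dense X) :
    Tendsto ((↑) : X → Z) (residual X) (residual Z) := by
  refine le_countableGenerate_iff_of_countableInterFilter.mpr ?_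
  rintro t ⟨ht, htd⟩
  exact residual_of_dense_open (ht.preimage continuous_subtype_val)
    (hX.dense_preimage_val_of_isOpen ht htd)

lemma Dense.mem_residual_of_baireMeasurableSet [BaireSpace X] (hX : Dense X)
    (hBM : BaireMeasurableSet X) : X ∈ residual Z := by
  obtain ⟨V, hVopen, hXV⟩ := hBM.compl.residualEq_isOpen
  have hVX_meagre : IsMeagre (V ∩ X) := by
    filter_upwards [hXV] with z hz ⟨hzV, hzX⟩
    exact hz.mpr hzV hzX
  have hV_meagre : IsMeagre ((↑) ⁻¹' V : Set X) := by
    have : IsMeagre ((↑) ⁻¹' (V ∩ X) : Set X) := hX.tendsto_residual_val hVX_meagre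
    rwa [preimage_inter, Subtype.coe_preimage_self, inter_univ] at this
  have hV_empty : V = ∅ := by
    by_contra hV
    obtain ⟨z, hzV, hzX⟩ := hX.inter_open_nonempty V hVopen (nonempty_iff_ne_empty.mpr hV)
    exact not_isMeagre_of_isOpen (hVopen.preimage continuous_subtype_val)
      ⟨⟨z, hzX⟩, hzV⟩ hV_meagre
  subst hV_empty
  simpa using eventuallyEq_empty.mp hXV

/-- Assuming every subset of every Polish space has the Baire property (BP), every dense
Baire subspace of a Polish space is comeager. -/
theorem statement2
    (hBP : ∀ (W : Type) [TopologicalSpace W] [PolishSpace W] (A : Set W), BaireMeasurableSet A)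
    (Z : Type) [TopologicalSpace Z] [PolishSpace Z]
    (X : Set Z) (hdense : Dense X) (hBaire : BaireSpace X) :
    X ∈ residual Z :=
  hdense.mem_residual_of_baireMeasurableSet (hBP Z X)
end

section
/- Let X be a separable metrizable space which has a base B consisting of clopen sets such that every U ∈ B is homeomorphic to X. Then X is strongly homogeneous, i.e., every non-empty clopen subspace of X is homeomorphic to X. -/
open Set Function Topology Filter TopologicalSpace

/-!
Fix a clopen `S ⊆ X` with nonempty complement. Using the base, choose embeddings
`gₙ : X → X` with clopen images `X = W₀ ⊇ W₁ ⊇ W₂ ⊇ ⋯`, where `g₀ = id`, `Wₙ₊₁ ⊆ gₙ(Sᶜ)`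
and `diam Wₙ → 0`. The copies `gₙ(S)` of `S` are then pairwise disjoint, and the
Hilbert-hotel map sending `gₙ(s)` to `gₙ₊₁(s)` and fixing every other point is a bijection
of `X` onto `Sᶜ`. It is continuous off `⋂ Wₙ`, where it is locally given by finitely many
continuous pieces, and at the single point of `⋂ Wₙ` because it maps `Wₙ₊₂` into `Wₙ`;
the same holds for its inverse. Hence `X ≅ Sᶜ`, and taking `S = Vᶜ` gives `X ≅ V`.
-/

section TransportCopies

variable {X : Type*} [Nonempty X] {a b : ℕ → X → X} {S : Set X} {x : X}

open Classical in
noncomputable def transportCopies (a b : ℕ → X → X) (S : Set X) (x : X) : X :=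
  if h : ∃ n, x ∈ a n '' S then b (Nat.find h) (invFun (a (Nat.find h)) x) else x

theorem transportCopies_apply (ha : ∀ n, Injective (a n))
    (hdisj : Pairwise (Disjoint on fun n => a n '' S)) {n : ℕ} {s : X} (hs : s ∈ S) :
    transportCopies a b S (a n s) = b n s := by
  classical
  have h : ∃ m, a n s ∈ a m '' S := ⟨n, mem_image_of_mem _ hs⟩
  have hfind : Nat.find h = n := by
    by_contra hne
    exact (hdisj hne).ne_of_mem (Nat.find_spec h) (mem_image_of_mem _ hs) rfl
  rw [transportCopies, dif_pos h, hfind, leftInverse_invFun (ha n) s]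

theorem transportCopies_of_notMem (hx : ∀ n, x ∉ a n '' S) : transportCopies a b S x = x := by
  rw [transportCopies, dif_neg (not_exists.mpr hx)]

theorem transportCopies_transportCopies (ha : ∀ n, Injective (a n)) (hb : ∀ n, Injective (b n))
    (hdisj_a : Pairwise (Disjoint on fun n => a n '' S))
    (hdisj_b : Pairwise (Disjoint on fun n => b n '' S))
    (hx : (∃ n, x ∈ b n '' S) → ∃ n, x ∈ a n '' S) :
    transportCopies b a S (transportCopies a b S x) = x := by
  by_cases h : ∃ n, x ∈ a n '' S
  · obtain ⟨n, s, hs, rfl⟩ := h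
    rw [transportCopies_apply ha hdisj_a hs, transportCopies_apply hb hdisj_b hs]
  · rw [transportCopies_of_notMem (not_exists.mp h),
      transportCopies_of_notMem fun n hn => h (hx ⟨n, hn⟩)]

theorem continuousOn_transportCopies [TopologicalSpace X] (ha : ∀ n, IsEmbedding (a n))
    (hb : ∀ n, Continuous (b n)) (hdisj : Pairwise (Disjoint on fun n => a n '' S)) (n : ℕ) :
    ContinuousOn (transportCopies a b S) (a n '' S) := by
  rw [(ha n).isInducing.continuousOn_image_iff]
  exact (hb n).continuousOn.congr fun s hs =>
    transportCopies_apply (fun n => (ha n).injective) hdisj hs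

end TransportCopies

section ShrinkingPieces

variable {X : Type*} {f : X → X} {A W : ℕ → Set X}

theorem mapsTo_add_two_of_pieces (hW : Antitone W) (hAW : ∀ n, Disjoint (A n) (W (n + 2)))
    (hf_maps : ∀ n, MapsTo f (A n) (W n)) (hf_id : ∀ x ∉ ⋃ n, A n, f x = x) (n : ℕ) :
    MapsTo f (W (n + 2)) (W n) := by
  intro y hy
  by_cases hyA : ∃ j, y ∈ A j
  · obtain ⟨j, hj⟩ := hyA
    have hnj : n ≤ j := by
      by_contra! hjn
      exact (hAW j).notMem_of_mem_right (hW (by omega) hy) hj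
    exact hW hnj (hf_maps j hj)
  · rw [hf_id y (by simpa using hyA)]
    exact hW (by omega) hy

variable [TopologicalSpace X]

theorem eventuallyEq_id_of_notMem_iUnion (hW : Antitone W) (hW_closed : ∀ n, IsClosed (W n))
    (hA_closed : ∀ n, IsClosed (A n)) (hAW : ∀ n, A n ⊆ W n)
    (hf_id : ∀ x ∉ ⋃ n, A n, f x = x)
    {x : X} {m : ℕ} (hxA : x ∉ ⋃ n, A n) (hxW : x ∉ W m) : f =ᶠ[𝓝 x] id := by
  have hopen : IsOpen ((W m)ᶜ \ ⋃ n ∈ {n | n < m}, A n) :=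
    (hW_closed m).isOpen_compl.sdiff ((finite_lt_nat m).isClosed_biUnion fun n _ => hA_closed n)
  have hx : x ∈ (W m)ᶜ \ ⋃ n ∈ {n | n < m}, A n :=
    ⟨hxW, fun h => hxA (iUnion₂_subset_iUnion _ _ h)⟩
  filter_upwards [hopen.mem_nhds hx] with y ⟨hyW, hyA⟩
  refine hf_id y fun hy => ?_
  obtain ⟨n, hn⟩ := mem_iUnion.mp hy
  rcases lt_or_ge n m with h | h
  · exact hyA (mem_biUnion h hn)
  · exact hyW (hW h (hAW n hn))

theorem continuousAt_of_mem_iInter (hW_open : ∀ n, IsOpen (W n))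
    (hW_nhds : ∀ x ∈ ⋂ n, W n, ∀ U ∈ 𝓝 x, ∃ n, W n ⊆ U)
    (hf_maps : ∀ n, MapsTo f (W (n + 2)) (W n)) {x : X} (hx : x ∈ ⋂ n, W n) (hfx : f x = x) :
    ContinuousAt f x := by
  intro U hU
  rw [hfx] at hU
  obtain ⟨n, hn⟩ := hW_nhds x hx U hU
  exact mem_map.mpr <| mem_of_superset ((hW_open (n + 2)).mem_nhds (mem_iInter.mp hx _))
    fun y hy => hn (hf_maps n hy)

theorem continuous_of_shrinking_pieces (hW : Antitone W) (hW_clopen : ∀ n, IsClopen (W n))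
    (hW_nhds : ∀ x ∈ ⋂ n, W n, ∀ U ∈ 𝓝 x, ∃ n, W n ⊆ U)
    (hA_clopen : ∀ n, IsClopen (A n))
    (hAW : ∀ n, A n ⊆ W n) (hAW_disj : ∀ n, Disjoint (A n) (W (n + 2)))
    (hf_cont : ∀ n, ContinuousOn f (A n)) (hf_maps : ∀ n, MapsTo f (A n) (W n))
    (hf_id : ∀ x ∉ ⋃ n, A n, f x = x) : Continuous f := by
  refine continuous_iff_continuousAt.mpr fun x => ?_
  by_cases hxA : ∃ n, x ∈ A n
  · obtain ⟨n, hn⟩ := hxA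
    exact (hf_cont n).continuousAt ((hA_clopen n).isOpen.mem_nhds hn)
  have hxA' : x ∉ ⋃ n, A n := by simpa using hxA
  by_cases hxW : ∃ m, x ∉ W m
  · obtain ⟨m, hm⟩ := hxW
    exact continuousAt_id.congr
      (eventuallyEq_id_of_notMem_iUnion hW (fun n => (hW_clopen n).isClosed)
        (fun n => (hA_clopen n).isClosed) hAW hf_id hxA' hm).symm
  · exact continuousAt_of_mem_iInter (fun n => (hW_clopen n).isOpen) hW_nhds
      (mapsTo_add_two_of_pieces hW hAW_disj hf_maps hf_id) (by simpa using hxW) (hf_id x hxA')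

end ShrinkingPieces

structure NestedCopies (X : Type*) [TopologicalSpace X] (S : Set X) where
  copy : ℕ → X → X
  copy_zero : copy 0 = id
  isEmbedding_copy : ∀ n, IsEmbedding (copy n)
  isClopen_range_copy : ∀ n, IsClopen (range (copy n))
  range_copy_succ_subset : ∀ n, range (copy (n + 1)) ⊆ copy n '' Sᶜ
  -- the topological form of `diam (range (copy n)) → 0`
  exists_range_copy_subset :
    ∀ x ∈ ⋂ n, range (copy n), ∀ U ∈ 𝓝 x, ∃ n, range (copy n) ⊆ U

namespace NestedCopies

variable {X : Type*} [TopologicalSpace X] {S : Set X} (c : NestedCopies X S)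

theorem antitone_range : Antitone fun n => range (c.copy n) :=
  antitone_nat_of_succ_le fun n => (c.range_copy_succ_subset n).trans (image_subset_range _ _)

theorem image_copy_zero : c.copy 0 '' S = S := by
  rw [c.copy_zero, image_id]

theorem disjoint_image_range {m n : ℕ} (h : m < n) :
    Disjoint (c.copy m '' S) (range (c.copy n)) :=
  ((disjoint_image_iff (c.isEmbedding_copy m).injective).mpr disjoint_compl_right).mono_right
    ((c.antitone_range h).trans (c.range_copy_succ_subset m))

theorem pairwise_disjoint_image : Pairwise (Disjoint on fun n => c.copy n '' S) := by
  intro m n hmn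
  rcases hmn.lt_or_gt with h | h
  · exact (c.disjoint_image_range h).mono_right (image_subset_range _ _)
  · exact ((c.disjoint_image_range h).mono_right (image_subset_range _ _)).symm

theorem isClopen_image (hS : IsClopen S) (n : ℕ) : IsClopen (c.copy n '' S) :=
  ⟨(IsClosedEmbedding.mk (c.isEmbedding_copy n) (c.isClopen_range_copy n).isClosed).isClosedMap
      _ hS.isClosed,
    (IsOpenEmbedding.mk (c.isEmbedding_copy n) (c.isClopen_range_copy n).isOpen).isOpenMap
      _ hS.isOpen⟩

variable [Nonempty X]

noncomputable def shift : X → X :=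
  transportCopies c.copy (fun n => c.copy (n + 1)) S

noncomputable def unshift : X → X :=
  transportCopies (fun n => c.copy (n + 1)) c.copy S

theorem shift_apply {n : ℕ} {s : X} (hs : s ∈ S) : c.shift (c.copy n s) = c.copy (n + 1) s :=
  transportCopies_apply (fun n => (c.isEmbedding_copy n).injective) c.pairwise_disjoint_image hs

theorem unshift_apply {n : ℕ} {s : X} (hs : s ∈ S) :
    c.unshift (c.copy (n + 1) s) = c.copy n s :=
  transportCopies_apply (fun n => (c.isEmbedding_copy (n + 1)).injective)
    (c.pairwise_disjoint_image.comp_of_injective Nat.succ_injective) hs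

theorem shift_mem_compl (x : X) : c.shift x ∈ Sᶜ := by
  by_cases h : ∃ n, x ∈ c.copy n '' S
  · obtain ⟨n, s, hs, rfl⟩ := h
    have h0 := (c.disjoint_image_range n.succ_pos).notMem_of_mem_right (mem_range_self s)
    rwa [c.image_copy_zero, ← c.shift_apply hs] at h0
  · rw [shift, transportCopies_of_notMem (not_exists.mp h)]
    simpa [c.image_copy_zero] using not_exists.mp h 0

theorem unshift_shift (x : X) : c.unshift (c.shift x) = x :=
  transportCopies_transportCopies (fun n => (c.isEmbedding_copy n).injective)
    (fun n => (c.isEmbedding_copy (n + 1)).injective) c.pairwise_disjoint_image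
    (c.pairwise_disjoint_image.comp_of_injective Nat.succ_injective)
    fun ⟨n, hn⟩ => ⟨n + 1, hn⟩

theorem shift_unshift {x : X} (hx : x ∈ Sᶜ) : c.shift (c.unshift x) = x := by
  refine transportCopies_transportCopies (fun n => (c.isEmbedding_copy (n + 1)).injective)
    (fun n => (c.isEmbedding_copy n).injective)
    (c.pairwise_disjoint_image.comp_of_injective Nat.succ_injective) c.pairwise_disjoint_image ?_
  rintro ⟨_ | n, hn⟩
  · exact absurd (c.image_copy_zero ▸ hn) hx
  · exact ⟨n, hn⟩

theorem continuous_shift (hS : IsClopen S) : Continuous c.shift := by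
  refine continuous_of_shrinking_pieces (A := fun n => c.copy n '' S) c.antitone_range
    c.isClopen_range_copy c.exists_range_copy_subset (c.isClopen_image hS)
    (fun n => image_subset_range _ _)
    (fun n => c.disjoint_image_range (by omega))
    (continuousOn_transportCopies c.isEmbedding_copy (fun n => (c.isEmbedding_copy _).continuous)
      c.pairwise_disjoint_image) ?_ fun x hx => transportCopies_of_notMem (by simpa using hx)
  rintro n _ ⟨s, hs, rfl⟩
  rw [c.shift_apply hs]
  exact c.antitone_range n.le_succ (mem_range_self s)

theorem continuous_unshift (hS : IsClopen S) : Continuous c.unshift := by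
  refine continuous_of_shrinking_pieces (A := fun n => c.copy (n + 1) '' S) c.antitone_range
    c.isClopen_range_copy c.exists_range_copy_subset (fun n => c.isClopen_image hS (n + 1))
    (fun n => (image_subset_range _ _).trans (c.antitone_range n.le_succ))
    (fun n => c.disjoint_image_range (by omega))
    (continuousOn_transportCopies (fun n => c.isEmbedding_copy (n + 1))
      (fun n => (c.isEmbedding_copy n).continuous)
      (c.pairwise_disjoint_image.comp_of_injective Nat.succ_injective)) ?_
    fun x hx => transportCopies_of_notMem (by simpa using hx)
  rintro n _ ⟨s, hs, rfl⟩
  rw [c.unshift_apply hs]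
  exact mem_range_self s

noncomputable def homeomorphCompl (hS : IsClopen S) : X ≃ₜ (Sᶜ : Set X) where
  toFun x := ⟨c.shift x, c.shift_mem_compl x⟩
  invFun y := c.unshift y
  left_inv := c.unshift_shift
  right_inv y := Subtype.ext (c.shift_unshift y.2)
  continuous_toFun := (c.continuous_shift hS).subtype_mk _
  continuous_invFun := (c.continuous_unshift hS).comp continuous_subtype_val

end NestedCopies

section MetricSpace

variable {X : Type*} [MetricSpace X] {B : Set (Set X)}

theorem exists_small_clopen_copy_subset (hbase : IsTopologicalBasis B)
    (hclopen : ∀ U ∈ B, IsClopen U) (hhomeo : ∀ U ∈ B, Nonempty (U ≃ₜ X)) {O : Set X}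
    (hO : IsOpen O) (hne : O.Nonempty) {ε : ℝ} (hε : 0 < ε) :
    ∃ g : X → X, IsEmbedding g ∧ IsClopen (range g) ∧ range g ⊆ O ∧
      ∀ a ∈ range g, ∀ b ∈ range g, dist a b < ε := by
  obtain ⟨x, hx⟩ := hne
  obtain ⟨U, hUB, hxU, hUO⟩ := hbase.exists_subset_of_mem_open
    (show x ∈ O ∩ Metric.ball x (ε / 2) from ⟨hx, Metric.mem_ball_self (half_pos hε)⟩)
    (hO.inter Metric.isOpen_ball)
  obtain ⟨e⟩ := hhomeo U hUB
  have hrange : range (Subtype.val ∘ e.symm) = U := by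
    rw [range_comp, e.symm.surjective.range_eq, image_univ, Subtype.range_coe]
  refine ⟨Subtype.val ∘ e.symm, IsEmbedding.subtypeVal.comp e.symm.isEmbedding, ?_, ?_, ?_⟩
    <;> rw [hrange]
  · exact hclopen U hUB
  · exact hUO.trans inter_subset_left
  · intro a ha b hb
    calc dist a b ≤ dist a x + dist b x := dist_triangle_right a b x
      _ < ε / 2 + ε / 2 := add_lt_add (hUO ha).2 (hUO hb).2
      _ = ε := add_halves ε

theorem NestedCopies.nonempty_of_isTopologicalBasis (hbase : IsTopologicalBasis B)
    (hclopen : ∀ U ∈ B, IsClopen U) (hhomeo : ∀ U ∈ B, Nonempty (U ≃ₜ X)) {S : Set X}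
    (hS : IsClosed S) (hne : Sᶜ.Nonempty) : Nonempty (NestedCopies X S) := by
  let ClopenCopy := {g : X → X // IsEmbedding g ∧ IsClopen (range g)}
  have step (n : ℕ) (g : ClopenCopy) : ∃ g' : ClopenCopy, range g'.1 ⊆ g.1 '' Sᶜ ∧
      ∀ a ∈ range g'.1, ∀ b ∈ range g'.1, dist a b < 1 / ((n : ℝ) + 1) := by
    obtain ⟨g', hemb, hclopen', hsub, hsmall⟩ := exists_small_clopen_copy_subset hbase hclopen
      hhomeo ((IsOpenEmbedding.mk g.2.1 g.2.2.isOpen).isOpenMap _ hS.isOpen_compl)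
      (hne.image g.1) Nat.one_div_pos_of_nat
    exact ⟨⟨g', hemb, hclopen'⟩, hsub, hsmall⟩
  choose next hnext using step
  let copies : ℕ → ClopenCopy := fun n =>
    Nat.rec ⟨id, .id, by simpa only [range_id] using isClopen_univ⟩ next n
  refine ⟨⟨fun n => (copies n).1, rfl, fun n => (copies n).2.1, fun n => (copies n).2.2,
    fun n => (hnext n (copies n)).1, fun x hx U hU => ?_⟩⟩
  obtain ⟨δ, hδ, hball⟩ := Metric.mem_nhds_iff.mp hU
  obtain ⟨n, hn⟩ := exists_nat_one_div_lt hδ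
  exact ⟨n + 1, fun y hy => hball
    (((hnext n (copies n)).2 y hy x (mem_iInter.mp hx (n + 1))).trans hn)⟩

end MetricSpace

theorem statement3_general (X : Type*) [TopologicalSpace X] [TopologicalSpace.MetrizableSpace X]
    (B : Set (Set X)) (hbase : TopologicalSpace.IsTopologicalBasis B)
    (hclopen : ∀ U ∈ B, IsClopen U)
    (hhomeo : ∀ U ∈ B, Nonempty (U ≃ₜ X)) :
    ∀ V : Set X, IsClopen V → V.Nonempty → Nonempty (V ≃ₜ X) := by
  intro V hV hVne
  have : Nonempty X := ⟨hVne.some⟩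
  let _ : MetricSpace X := TopologicalSpace.metrizableSpaceMetric X
  obtain ⟨c⟩ := NestedCopies.nonempty_of_isTopologicalBasis hbase hclopen hhomeo
    hV.compl.isClosed (by rwa [compl_compl])
  exact ⟨((c.homeomorphCompl hV.compl).trans (Homeomorph.setCongr (compl_compl V))).symm⟩

/-- Terada's lemma: if a separable metrizable space `X` has a base of clopen sets each
homeomorphic to `X`, then `X` is strongly homogeneous: every non-empty clopen subspace
is homeomorphic to `X`. -/
theorem statement3 (X : Type*) [TopologicalSpace X] [TopologicalSpace.MetrizableSpace X]
    [TopologicalSpace.SeparableSpace X]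
    (B : Set (Set X)) (hbase : TopologicalSpace.IsTopologicalBasis B)
    (hclopen : ∀ U ∈ B, IsClopen U)
    (hhomeo : ∀ U ∈ B, Nonempty (U ≃ₜ X)) :
    ∀ V : Set X, IsClopen V → V.Nonempty → Nonempty (V ≃ₜ X) :=
  statement3_general X B hbase hclopen hhomeo
end

section
/- Every zero-dimensional separable metrizable strongly homogeneous space is homogeneous. -/
/-!
Since `X` has two points and every nonempty clopen set is homeomorphic to `X`, no point is
isolated, so every point `x` has a neighbourhood base of clopen sets
`X = U₀ ⊋ U₁ ⊋ U₂ ⊋ ⋯`. The annuli `Uₙ \ Uₙ₊₁` are nonempty and clopen, hence homeomorphic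
to `X`, and together with `{x}` they partition `X`. Given such bases at `x` and at `y`, send `x`
to `y` and the `n`-th annulus at `x` homeomorphically onto the `n`-th annulus at `y`. The
resulting bijection is continuous away from `x` because the annuli are open, and at `x` because
`Uₙ` is `{x}` together with the annuli of index at least `n`.
-/

open Set Filter Topology TopologicalSpace

namespace Equiv

variable {ι α β : Type*} {s : ι → Set α} {t : ι → Set β}

noncomputable def glue (hs : ∀ a, ∃! i, a ∈ s i) (ht : ∀ b, ∃! i, b ∈ t i)
    (F : ∀ i, s i ≃ t i) : α ≃ β :=
  (sigmaEquiv s hs).symm.trans ((sigmaCongrRight F).trans (sigmaEquiv t ht))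

variable {hs : ∀ a, ∃! i, a ∈ s i} {ht : ∀ b, ∃! i, b ∈ t i} {F : ∀ i, s i ≃ t i}

theorem glue_apply_of_mem {a : α} {i : ι} (ha : a ∈ s i) :
    glue hs ht F a = F i ⟨a, ha⟩ := by
  have : (sigmaEquiv s hs).symm a = ⟨i, a, ha⟩ := (Equiv.symm_apply_eq _).2 rfl
  change sigmaEquiv t ht (sigmaCongrRight F ((sigmaEquiv s hs).symm a)) = _
  rw [this]
  rfl

theorem glue_mem_of_mem {a : α} {i : ι} (ha : a ∈ s i) : glue hs ht F a ∈ t i :=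
  glue_apply_of_mem ha ▸ (F i ⟨a, ha⟩).2

theorem glue_symm : (glue hs ht F).symm = glue ht hs fun i => (F i).symm := by
  ext b
  obtain ⟨i, hb, -⟩ := ht b
  rw [Equiv.symm_apply_eq, glue_apply_of_mem hb, glue_apply_of_mem ((F i).symm ⟨b, hb⟩).2]
  simp

theorem continuousAt_glue [TopologicalSpace α] [TopologicalSpace β] {a : α} {i : ι}
    (hsa : s i ∈ 𝓝 a) (hF : Continuous (F i)) : ContinuousAt (glue hs ht F) a := by
  have : (s i).domRestrict (glue hs ht F) = fun a => (F i a : β) := by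
    funext a
    exact glue_apply_of_mem a.2
  refine ContinuousOn.continuousAt ?_ hsa
  rw [continuousOn_iff_continuous_domRestrict, this]
  fun_prop

end Equiv

section ClopenShells

variable {X : Type*}

def annulus (U : ℕ → Set X) (n : ℕ) : Set X := U n \ U (n + 1)

theorem Antitone.le_of_mem_annulus {U : ℕ → Set X} (hU : Antitone U) {z : X} {m n : ℕ}
    (hm : z ∈ U m) (hn : z ∈ annulus U n) : m ≤ n := by
  by_contra! h
  exact hn.2 (hU h hm)

theorem exists_mem_annulus {U : ℕ → Set X} (h0 : U 0 = univ) {z : X} {k : ℕ}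
    (hk : z ∉ U k) : ∃ n, z ∈ annulus U n := by
  induction k with
  | zero => simp [h0] at hk
  | succ k ih =>
    by_cases hz : z ∈ U k
    · exact ⟨k, hz, hk⟩
    · exact ih hz

def shellPiece (x : X) (U : ℕ → Set X) (i : Option ℕ) : Set X := i.elim {x} (annulus U)

variable [TopologicalSpace X]

noncomputable def shellPieceHomeomorph {x y : X} {U V : ℕ → Set X}
    (e : ∀ n, annulus U n ≃ₜ annulus V n) : ∀ i, shellPiece x U i ≃ₜ shellPiece y V i
  | none => @Homeomorph.homeomorphOfUnique _ _ _ _ (uniqueSingleton x) (uniqueSingleton y)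
  | some n => e n

structure IsClopenShellBasis (x : X) (U : ℕ → Set X) : Prop where
  zero_eq_univ : U 0 = univ
  isClopen : ∀ n, IsClopen (U n)
  hasAntitoneBasis : (𝓝 x).HasAntitoneBasis U
  annulus_nonempty : ∀ n, (annulus U n).Nonempty

namespace IsClopenShellBasis

variable {x y : X} {U V : ℕ → Set X}

theorem isClopen_annulus (hU : IsClopenShellBasis x U) (n : ℕ) : IsClopen (annulus U n) :=
  (hU.isClopen n).diff (hU.isClopen (n + 1))

theorem self_mem (hU : IsClopenShellBasis x U) (n : ℕ) : x ∈ U n :=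
  mem_of_mem_nhds (hU.hasAntitoneBasis.mem n)

theorem existsUnique_mem_shellPiece [T1Space X] (hU : IsClopenShellBasis x U) (z : X) :
    ∃! i, z ∈ shellPiece x U i := by
  have not_mem_annulus (n : ℕ) : x ∉ annulus U n := fun h => h.2 (hU.self_mem (n + 1))
  rcases eq_or_ne z x with rfl | hzx
  · refine ⟨none, rfl, fun i hi => ?_⟩
    cases i with
    | none => rfl
    | some n => exact absurd hi (not_mem_annulus n)
  · obtain ⟨k, hk⟩ := hU.hasAntitoneBasis.mem_iff.1 (compl_singleton_mem_nhds hzx.symm)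
    obtain ⟨n, hn⟩ := exists_mem_annulus hU.zero_eq_univ fun h => hk h rfl
    refine ⟨some n, hn, fun i hi => ?_⟩
    cases i with
    | none => exact absurd hi hzx
    | some m => exact congrArg some (le_antisymm
        (hU.hasAntitoneBasis.antitone.le_of_mem_annulus hi.1 hn)
        (hU.hasAntitoneBasis.antitone.le_of_mem_annulus hn.1 hi))

variable [T1Space X]

theorem continuous_glue (hU : IsClopenShellBasis x U) (hV : IsClopenShellBasis y V)
    (F : ∀ i, shellPiece x U i ≃ₜ shellPiece y V i) :
    Continuous (Equiv.glue hU.existsUnique_mem_shellPiece hV.existsUnique_mem_shellPiece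
      fun i => (F i).toEquiv) := by
  set f := Equiv.glue hU.existsUnique_mem_shellPiece hV.existsUnique_mem_shellPiece
    fun i => (F i).toEquiv
  have hf {w : X} {i : Option ℕ} (hw : w ∈ shellPiece x U i) : f w ∈ shellPiece y V i :=
    Equiv.glue_mem_of_mem hw
  refine continuous_iff_continuousAt.2 fun z => ?_
  obtain ⟨_ | n, hz, -⟩ := hU.existsUnique_mem_shellPiece z
  · rw [show z = x from hz, ContinuousAt, show f x = y from hf (i := none) rfl,
      hU.hasAntitoneBasis.tendsto_iff hV.hasAntitoneBasis.toHasBasis]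
    refine fun m _ => ⟨m, trivial, fun w hw => ?_⟩
    obtain ⟨_ | k, hw', -⟩ := hU.existsUnique_mem_shellPiece w
    · exact (show f w = y from hf hw') ▸ hV.self_mem m
    · have hmk : m ≤ k := hU.hasAntitoneBasis.antitone.le_of_mem_annulus hw hw'
      exact hV.hasAntitoneBasis.antitone hmk (hf hw').1
  · exact Equiv.continuousAt_glue ((hU.isClopen_annulus n).isOpen.mem_nhds hz) (i := some n)
      (F (some n)).continuous

noncomputable def glue (hU : IsClopenShellBasis x U) (hV : IsClopenShellBasis y V)
    (F : ∀ i, shellPiece x U i ≃ₜ shellPiece y V i) : X ≃ₜ X where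
  toEquiv := Equiv.glue hU.existsUnique_mem_shellPiece hV.existsUnique_mem_shellPiece
    fun i => (F i).toEquiv
  continuous_toFun := hU.continuous_glue hV F
  continuous_invFun := by
    convert hV.continuous_glue hU fun i => (F i).symm
    exact congrArg DFunLike.coe Equiv.glue_symm

theorem glue_apply_self (hU : IsClopenShellBasis x U) (hV : IsClopenShellBasis y V)
    (F : ∀ i, shellPiece x U i ≃ₜ shellPiece y V i) : hU.glue hV F x = y :=
  Equiv.glue_mem_of_mem (F := fun i => (F i).toEquiv) (a := x) (i := none) rfl

end IsClopenShellBasis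

variable {B : Set (Set X)}

theorem nhdsNE_neBot_of_isTopologicalBasis (hB : IsTopologicalBasis B) {x : X}
    (hBx : ∀ C ∈ B, x ∈ C → C.Nontrivial) : (𝓝[≠] x).NeBot := by
  refine mem_closure_iff_nhdsWithin_neBot.1 (hB.mem_closure_iff.2 fun C hC hxC => ?_)
  obtain ⟨z, hzC, hzx⟩ := (hBx C hC hxC).exists_ne x
  exact ⟨z, hzC, hzx⟩

variable [T1Space X]

theorem exists_isClopen_subset_diff_nonempty (hB : IsTopologicalBasis B)
    (hBc : ∀ C ∈ B, IsClopen C) {x : X} [(𝓝[≠] x).NeBot] {C s : Set X} (hC : IsClopen C)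
    (hxC : x ∈ C) (hs : s ∈ 𝓝 x) :
    ∃ D, IsClopen D ∧ x ∈ D ∧ D ⊆ C ∩ s ∧ (C \ D).Nonempty := by
  obtain ⟨z, hzx, hzC⟩ : ({x}ᶜ ∩ C).Nonempty :=
    Filter.nonempty_of_mem (inter_mem_nhdsWithin _ (hC.isOpen.mem_nhds hxC))
  obtain ⟨D, hDB, hxD, hD⟩ := hB.mem_nhds_iff.1 <|
    inter_mem (inter_mem (hC.isOpen.mem_nhds hxC) hs) (compl_singleton_mem_nhds (Ne.symm hzx))
  exact ⟨D, hBc D hDB, hxD, fun w hw => (hD hw).1, z, hzC, fun hzD => (hD hzD).2 rfl⟩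

theorem exists_isClopenShellBasis [FirstCountableTopology X] (hB : IsTopologicalBasis B)
    (hBc : ∀ C ∈ B, IsClopen C) (x : X) [(𝓝[≠] x).NeBot] :
    ∃ U, IsClopenShellBasis x U := by
  obtain ⟨s, hs⟩ := (𝓝 x).exists_antitone_basis
  choose! next hnext using fun (n : ℕ) (C : Set X) (hC : IsClopen C ∧ x ∈ C) =>
    exists_isClopen_subset_diff_nonempty hB hBc hC.1 hC.2 (hs.mem n)
  let U (n : ℕ) : Set X := Nat.rec univ next n
  have hU (n : ℕ) : IsClopen (U n) ∧ x ∈ U n := by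
    induction n with
    | zero => exact ⟨isClopen_univ, mem_univ x⟩
    | succ n ih => exact ⟨(hnext n _ ih).1, (hnext n _ ih).2.1⟩
  have hsucc (n : ℕ) : U (n + 1) ⊆ U n ∩ s n := (hnext n _ (hU n)).2.2.1
  have hbasis : (𝓝 x).HasBasis (fun _ => True) U :=
    hs.toHasBasis.to_hasBasis' (fun n _ => ⟨n + 1, trivial, (hsucc n).trans inter_subset_right⟩)
      fun n _ => (hU n).1.isOpen.mem_nhds (hU n).2
  exact ⟨U, rfl, fun n => (hU n).1,
    ⟨hbasis, antitone_nat_of_succ_le fun n => (hsucc n).trans inter_subset_left⟩,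
    fun n => (hnext n _ (hU n)).2.2.2⟩

end ClopenShells

theorem statement4_general (X : Type*) [TopologicalSpace X] [TopologicalSpace.MetrizableSpace X]
    (hzd : ∃ B : Set (Set X), TopologicalSpace.IsTopologicalBasis B ∧ ∀ U ∈ B, IsClopen U)
    (hsh : ∀ V : Set X, IsClopen V → V.Nonempty → Nonempty (V ≃ₜ X)) :
    ∀ x y : X, ∃ h : X ≃ₜ X, h x = y := by
  intro x y
  rcases eq_or_ne x y with rfl | hxy
  · exact ⟨Homeomorph.refl X, rfl⟩
  have : Nontrivial X := ⟨x, y, hxy⟩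
  obtain ⟨B, hB, hBc⟩ := hzd
  have hperfect (p : X) : (𝓝[≠] p).NeBot :=
    nhdsNE_neBot_of_isTopologicalBasis hB fun C hC hpC =>
      nontrivial_coe_sort.1 (hsh C (hBc C hC) ⟨p, hpC⟩).some.toEquiv.nontrivial
  obtain ⟨U, hU⟩ := exists_isClopenShellBasis hB hBc x
  obtain ⟨V, hV⟩ := exists_isClopenShellBasis hB hBc y
  let e (n : ℕ) : annulus U n ≃ₜ annulus V n :=
    (hsh _ (hU.isClopen_annulus n) (hU.annulus_nonempty n)).some.trans
      (hsh _ (hV.isClopen_annulus n) (hV.annulus_nonempty n)).some.symm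
  exact ⟨hU.glue hV (shellPieceHomeomorph e), hU.glue_apply_self hV _⟩

/-- Every zero-dimensional separable metrizable strongly homogeneous space is homogeneous. -/
theorem statement4 (X : Type*) [TopologicalSpace X] [TopologicalSpace.MetrizableSpace X]
    [TopologicalSpace.SeparableSpace X]
    (hne : Nonempty X)
    (hzd : ∃ B : Set (Set X), TopologicalSpace.IsTopologicalBasis B ∧ ∀ U ∈ B, IsClopen U)
    (hsh : ∀ V : Set X, IsClopen V → V.Nonempty → Nonempty (V ≃ₜ X)) :
    ∀ x y : X, ∃ h : X ≃ₜ X, h x = y :=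
  statement4_general X hzd hsh
end

section
/- There exists (in ZFC) a subspace X of the Cantor space 2^ω of cardinality continuum such that the only homeomorphisms between 𝔠-crowded subspaces of X are identity maps; consequently, X is a zero-dimensional strongly 𝔠-hereditarily rigid space. -/
/-!
Enumerate, in order type `𝔠`, all pairs `(u, v)` of sequences in the Cantor space together
with all cylinders, each combination `𝔠` times, and pick `x i` by transfinite recursion in the
`i`-th cylinder, off the earlier points and off their images under the earlier limit maps
`limitMap u v` and `limitMap v u`. For the `α`-th pair, only points `x β` with `β ≤ α` can then
be exchanged inside `X = range x`, so fewer than `𝔠` of them.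

On the other hand, if `d` is a dense sequence in `S`, a homeomorphism `h : S ≃ₜ T` is the limit
map of `(d, h ∘ d)` and `h⁻¹` that of `(h ∘ d, d)`. If `h` moves a point, it moves every point
of a non-empty open subset of `S`, and when `S` is `𝔠`-crowded these are `𝔠` points exchanged by
one pair of limit maps.
-/

/-- A subset `S` of a space `Z` is `𝔠`-crowded (as a subspace) if it is non-empty and every
non-empty relatively open subset of it has cardinality continuum. -/
def SetCCrowded {Z : Type*} [TopologicalSpace Z] (S : Set Z) : Prop :=
  S.Nonempty ∧ ∀ U : Set Z, IsOpen U → (U ∩ S).Nonempty →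
    Cardinal.mk (U ∩ S : Set Z) = Cardinal.continuum

open Cardinal Set Filter Topology PiNat

universe u

/-- The limit of `v` along the indices `n` for which `u n` tends to `x`; a junk value when
`x` is not a cluster point of `u` or that limit does not exist. -/
noncomputable def limitMap {X Y : Type*} [TopologicalSpace X] [TopologicalSpace Y] [Nonempty Y]
    (u : ℕ → X) (v : ℕ → Y) (x : X) : Y :=
  limUnder (comap u (𝓝 x)) v

theorem limitMap_comp_eq_of_denseRange {X Y : Type*} [TopologicalSpace X] [TopologicalSpace Y]
    [T2Space Y] [Nonempty Y] {S : Set X} {f : S → Y} (hf : Continuous f) {d : ℕ → S}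
    (hd : DenseRange d) (s : S) : limitMap (fun n => (d n : X)) (f ∘ d) s = f s := by
  have hcomap : comap (fun n => (d n : X)) (𝓝 (s : X)) = comap d (𝓝 s) := by
    rw [nhds_subtype, comap_comap]; rfl
  have : (comap d (𝓝 s)).NeBot := comap_neBot fun t ht => hd.mem_nhds ht
  rw [limitMap, hcomap]
  exact ((hf.tendsto s).comp tendsto_comap).limUnder_eq

def exchangedPoints {Y : Type*} (F G : Y → Y) (X : Set Y) : Set Y :=
  {z ∈ X | F z ∈ X ∧ G (F z) = z ∧ F z ≠ z}

theorem Set.eq_of_forall_coe_equiv_apply_eq {α : Type*} {S T : Set α} (h : S ≃ T)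
    (hh : ∀ a, (h a : α) = a) : S = T := by
  refine Subset.antisymm (fun s hs => by simpa only [hh] using (h ⟨s, hs⟩).2) fun t ht => ?_
  have ht' : t = h.symm ⟨t, ht⟩ := by simpa using hh (h.symm ⟨t, ht⟩)
  rw [ht']
  exact (h.symm ⟨t, ht⟩).2

section Construction

variable {ι Y : Type u}

structure AvoidsImages [LT ι] (F G : ι → Y → Y) (x : ι → Y) : Prop where
  injective : Function.Injective x
  ne_left : ∀ ⦃i j k⦄, j < i → k < i → x i ≠ F j (x k)
  ne_right : ∀ ⦃i j k⦄, j < i → k < i → x i ≠ G j (x k)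

theorem AvoidsImages.le_of_apply_eq [LinearOrder ι] {F G : ι → Y → Y} {x : ι → Y}
    (hx : AvoidsImages F G x) {α β γ : ι} (hF : x γ = F α (x β)) (hG : x β = G α (x γ))
    (hne : β ≠ γ) : β ≤ α := by
  -- otherwise the later of `x β`, `x γ` was chosen after stage `α`, avoiding this very equation
  by_contra! hαβ
  rcases hne.lt_or_gt with hβγ | hγβ
  · exact hx.ne_left (hαβ.trans hβγ) hβγ hF
  · exact hx.ne_right hαβ hγβ hG

theorem AvoidsImages.mk_exchangedPoints_lt {κ : Cardinal.{u}} (hκ : ℵ₀ ≤ κ)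
    {F G : κ.ord.ToType → Y → Y} {x : κ.ord.ToType → Y} (hx : AvoidsImages F G x)
    (α : κ.ord.ToType) : #(exchangedPoints (F α) (G α) (range x)) < κ := by
  have hsub : exchangedPoints (F α) (G α) (range x) ⊆ x '' Iic α := by
    rintro _ ⟨⟨β, rfl⟩, ⟨γ, hγ⟩, hGF, hne⟩
    refine ⟨β, hx.le_of_apply_eq hγ (by rw [hγ, hGF]) ?_, rfl⟩
    rintro rfl
    exact hne hγ.symm
  have hIic : #(Iic α) < κ := by simpa using mk_Iic_lt α (by simp) (by simpa using hκ)
  exact (mk_le_mk_of_subset hsub).trans_lt (mk_image_le.trans_lt hIic)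

theorem mk_biUnion_image_lt {κ : Cardinal.{u}} (hκ : ℵ₀ ≤ κ) (F : ι → Y → Y) {I : Set ι}
    (hI : #I < κ) {A : Set Y} (hA : #A < κ) : #(⋃ j ∈ I, F j '' A) < κ :=
  calc #(⋃ j ∈ I, F j '' A) ≤ #I * ⨆ j : I, #(F j '' A) := mk_biUnion_le _ _
    _ ≤ #I * #A := by gcongr; exact ciSup_le' fun j => mk_image_le
    _ < κ := mul_lt_of_lt hκ hI hA

theorem exists_avoidsImages {κ : Cardinal.{u}} (hκ : ℵ₀ ≤ κ) (L : κ.ord.ToType → Set Y)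
    (hL : ∀ i, κ ≤ #(L i)) (F G : κ.ord.ToType → Y → Y) :
    ∃ x, AvoidsImages F G x ∧ ∀ i, x i ∈ L i := by
  set forbidden : κ.ord.ToType → Set Y → Set Y :=
    fun i A => A ∪ (⋃ j ∈ Iio i, F j '' A) ∪ ⋃ j ∈ Iio i, G j '' A
  have hIio (i : κ.ord.ToType) : #(Iio i) < κ := by simpa using mk_Iio_lt i
  have hpick (i : κ.ord.ToType) (A : {A : Set Y // #A < κ}) :
      ∃ y ∈ L i, y ∉ forbidden i A := by
    have hsmall : #(forbidden i A) < κ :=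
      (mk_union_le _ _).trans_lt <| add_lt_of_lt hκ
        ((mk_union_le _ _).trans_lt
          (add_lt_of_lt hκ A.2 (mk_biUnion_image_lt hκ F (hIio i) A.2)))
        (mk_biUnion_image_lt hκ G (hIio i) A.2)
    by_contra! h
    exact not_lt.2 ((hL i).trans (mk_le_mk_of_subset h)) hsmall
  choose pick hpickL hpick using hpick
  let x : κ.ord.ToType → Y := wellFounded_lt.fix fun i x =>
    pick i ⟨range fun j : Iio i => x j j.2, mk_range_le.trans_lt (hIio i)⟩
  have hx (i : κ.ord.ToType) : x i = pick i ⟨x '' Iio i, mk_image_le.trans_lt (hIio i)⟩ := by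
    refine (wellFounded_lt.fix_eq _ i).trans ?_
    simp only [image_eq_range]
    rfl
  have hfresh (i : κ.ord.ToType) : x i ∉ forbidden i (x '' Iio i) := by
    rw [hx i]
    exact hpick i ⟨x '' Iio i, mk_image_le.trans_lt (hIio i)⟩
  refine ⟨x, ⟨fun a b hab => ?_, fun i j k hj hk h => ?_, fun i j k hj hk h => ?_⟩,
    fun i => (hx i).symm ▸ hpickL i _⟩
  · by_contra hne
    rcases lt_or_gt_of_ne hne with h | h
    · exact hfresh b (Or.inl (Or.inl ⟨a, h, hab⟩))
    · exact hfresh a (Or.inl (Or.inl ⟨b, h, hab.symm⟩))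
  · exact hfresh i (Or.inl (Or.inr (mem_biUnion hj ⟨x k, mem_image_of_mem x hk, h.symm⟩)))
  · exact hfresh i (Or.inr (mem_biUnion hj ⟨x k, mem_image_of_mem x hk, h.symm⟩))

end Construction

theorem exists_forall_le_mk_preimage_singleton {ι J : Type u} [Nonempty J] (hι : ℵ₀ ≤ #ι)
    (hJ : #J ≤ #ι) : ∃ c : ι → J, ∀ j, #ι ≤ #(c ⁻¹' {j}) := by
  obtain ⟨e⟩ : Nonempty (ι × J ≃ ι) :=
    Cardinal.eq.1 (by rw [mk_prod, lift_id, lift_id, mul_eq_left hι hJ (mk_ne_zero J)])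
  refine ⟨fun i => (e.symm i).2, fun j => ?_⟩
  refine mk_le_of_injective (f := fun i => ⟨e (i, j), by simp⟩) fun a b hab => ?_
  simpa using congrArg Subtype.val hab

theorem exists_le_mk_inter_forall_mk_exchangedPoints_lt {κ : Cardinal.{u}} (hκ : ℵ₀ ≤ κ)
    {Z K P : Type u} [Nonempty K] [Nonempty P] (B : K → Set Z) (hB : ∀ k, κ ≤ #(B k))
    (Φ : P → (Z → Z) × (Z → Z)) (hK : #K ≤ κ) (hP : #P ≤ κ) :
    ∃ X : Set Z, (∀ k, κ ≤ #(B k ∩ X : Set Z)) ∧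
      ∀ p, #(exchangedPoints (Φ p).1 (Φ p).2 X) < κ := by
  have hι : #κ.ord.ToType = κ := by simp
  obtain ⟨c, hc⟩ := exists_forall_le_mk_preimage_singleton (ι := κ.ord.ToType) (J := P × K)
    (by rwa [hι]) (by
      rw [hι, mk_prod, lift_id, lift_id]
      exact (mul_le_mul' hP hK).trans_eq (mul_eq_self hκ))
  obtain ⟨x, hx, hxB⟩ := exists_avoidsImages hκ (fun i => B (c i).2) (fun i => hB _)
    (fun i => (Φ (c i).1).1) (fun i => (Φ (c i).1).2)
  refine ⟨range x, fun k => ?_, fun p => ?_⟩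
  · obtain ⟨p⟩ := ‹Nonempty P›
    have hsub : x '' (c ⁻¹' {(p, k)}) ⊆ B k ∩ range x := by
      rintro _ ⟨i, hi, rfl⟩
      rw [mem_preimage, mem_singleton_iff] at hi
      exact ⟨by simpa [hi] using hxB i, mem_range_self i⟩
    calc κ ≤ #(c ⁻¹' {(p, k)}) := hι.ge.trans (hc _)
      _ = #(x '' (c ⁻¹' {(p, k)})) := (mk_image_eq hx.injective).symm
      _ ≤ #(B k ∩ range x : Set Z) := mk_le_mk_of_subset hsub
  · obtain ⟨k⟩ := ‹Nonempty K›
    obtain ⟨i, hi⟩ : (c ⁻¹' {(p, k)}).Nonempty := by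
      rw [← nonempty_coe_sort, ← mk_ne_zero_iff]
      exact ((aleph0_pos.trans_le hκ).trans_le (hι.ge.trans (hc _))).ne'
    have hip : (c i).1 = p := congrArg Prod.fst hi
    simpa [hip] using hx.mk_exchangedPoints_lt hκ i

section Crowded

variable {Z : Type u} [TopologicalSpace Z] {S : Set Z}

theorem SetCCrowded.mk_eq_continuum_of_isOpen (hS : SetCCrowded S) {A : Set S} (hA : IsOpen A)
    (hne : A.Nonempty) : #A = 𝔠 := by
  obtain ⟨U, hU, rfl⟩ := isOpen_induced_iff.1 hA
  rw [← mk_image_eq Subtype.val_injective, Subtype.image_preimage_coe, inter_comm]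
  obtain ⟨a, ha⟩ := hne
  exact hS.2 U hU ⟨a, ha, a.2⟩

theorem SetCCrowded.mk_eq_continuum (hS : SetCCrowded S) : #S = 𝔠 := by
  simpa using hS.2 univ isOpen_univ (by simpa using hS.1)

theorem SetCCrowded.coe_homeomorph_apply_eq [T2Space Z] [SecondCountableTopology Z]
    [Nonempty Z] {X T : Set Z}
    (hX : ∀ u v : ℕ → Z, #(exchangedPoints (limitMap u v) (limitMap v u) X) < 𝔠)
    (hS : SetCCrowded S) (hSX : S ⊆ X) (hTX : T ⊆ X) (h : S ≃ₜ T) (a : S) : (h a : Z) = a := by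
  by_contra ha
  have : Nonempty S := ⟨a⟩
  obtain ⟨d, hd⟩ := TopologicalSpace.exists_dense_seq S
  set u : ℕ → Z := fun n => d n
  set v : ℕ → Z := fun n => h (d n)
  have hF (s : S) : limitMap u v s = h s :=
    limitMap_comp_eq_of_denseRange (continuous_subtype_val.comp h.continuous) hd s
  have hG (t : T) : limitMap v u t = h.symm t := by
    have hd' : DenseRange (h ∘ d) := h.surjective.denseRange.comp hd h.continuous
    simpa [Function.comp_def] using
      limitMap_comp_eq_of_denseRange (continuous_subtype_val.comp h.symm.continuous) hd' t
  let moved : Set S := {s | (h s : Z) ≠ s}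
  have hmoved : IsOpen moved :=
    (isClosed_eq (continuous_subtype_val.comp h.continuous) continuous_subtype_val).isOpen_compl
  have hsub : Subtype.val '' moved ⊆ exchangedPoints (limitMap u v) (limitMap v u) X := by
    rintro _ ⟨s, hs, rfl⟩
    refine ⟨hSX s.2, ?_, ?_, ?_⟩ <;> rw [hF s]
    · exact hTX (h s).2
    · rw [hG, Homeomorph.symm_apply_apply]
    · exact hs
  have := (mk_le_mk_of_subset hsub).trans_lt (hX u v)
  rw [mk_image_eq Subtype.val_injective, hS.mk_eq_continuum_of_isOpen hmoved ⟨a, ha⟩] at this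
  exact this.false

end Crowded

theorem mk_cantor : #(ℕ → Bool) = 𝔠 := by
  simp

theorem mk_cylinder (z : ℕ → Bool) (n : ℕ) : #(cylinder z n) = 𝔠 := by
  refine le_antisymm ((mk_set_le _).trans mk_cantor.le) (mk_cantor ▸ ?_)
  refine mk_le_of_injective (f := fun y => ⟨fun i => if i < n then z i else y (i - n),
    fun i hi => if_pos hi⟩) fun y y' hyy' => funext fun j => ?_
  simpa using congrFun (congrArg Subtype.val hyy') (j + n)

theorem setCCrowded_of_forall_le_mk_cylinder_inter {X : Set (ℕ → Bool)}
    (h : ∀ z n, 𝔠 ≤ #(cylinder z n ∩ X : Set (ℕ → Bool))) : SetCCrowded X := by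
  refine ⟨?_, fun U hU ⟨z, hzU, _⟩ => ?_⟩
  · have := h (fun _ => false) 0
    rw [cylinder_zero, univ_inter] at this
    exact nonempty_coe_sort.1 (mk_ne_zero_iff.1 (continuum_pos.trans_le this).ne')
  · obtain ⟨_, ⟨y, n, rfl⟩, -, hsub⟩ :=
      (isTopologicalBasis_cylinders _).exists_subset_of_mem_open hzU hU
    exact le_antisymm ((mk_set_le _).trans mk_cantor.le)
      ((h y n).trans (mk_le_mk_of_subset (inter_subset_inter_left _ hsub)))

/-- There is (in ZFC) a subspace `X` of the Cantor space of cardinality continuum, itself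
`𝔠`-crowded, such that the only homeomorphisms between `𝔠`-crowded subspaces of `X` are
identity maps; i.e. `X` is a zero-dimensional strongly `𝔠`-hereditarily rigid space. -/
theorem statement5 :
    ∃ X : Set (ℕ → Bool), Cardinal.mk X = Cardinal.continuum ∧ SetCCrowded X ∧
      ∀ S T : Set (ℕ → Bool), S ⊆ X → T ⊆ X → SetCCrowded S → SetCCrowded T →
        ∀ h : S ≃ₜ T, S = T ∧ ∀ a : S, ((h a : ℕ → Bool)) = (a : ℕ → Bool) := by
  obtain ⟨X, hcyl, hexch⟩ :=
    exists_le_mk_inter_forall_mk_exchangedPoints_lt aleph0_le_continuum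
      (fun k : (ℕ → Bool) × ℕ => cylinder k.1 k.2) (fun k => (mk_cylinder k.1 k.2).ge)
      (fun p : (ℕ → ℕ → Bool) × (ℕ → ℕ → Bool) => (limitMap p.1 p.2, limitMap p.2 p.1))
      (by simp) (by simp)
  have hX : SetCCrowded X := setCCrowded_of_forall_le_mk_cylinder_inter fun z n => hcyl (z, n)
  refine ⟨X, hX.mk_eq_continuum, hX, fun S T hSX hTX hS _ h => ?_⟩
  have hid := hS.coe_homeomorph_apply_eq (fun u v => hexch (u, v)) hSX hTX h
  exact ⟨Set.eq_of_forall_coe_equiv_apply_eq h.toEquiv hid, hid⟩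
end

section
/- There exists (in ZFC) a zero-dimensional separable metrizable space that is not σ-homogeneous, i.e., cannot be written as a countable union of homogeneous subspaces. -/
/-!
A continuous map on a subspace `Z` of a second-countable Hausdorff space `α` is determined by
its values on a countable dense subset of `Z`, so the homeomorphisms of subspaces of `α` are
coded by the `𝔠` pairs of sequences in `α`. Enumerate the codes in order type `𝔠` and choose
points one at a time, each avoiding the images and preimages of the earlier points under the
codes enumerated so far. The resulting `X` has size `𝔠`, yet every homeomorphism `h` of a
subspace of `X` moves fewer than `𝔠` points: for a moved point `z`, one of `z` and `h z` was
chosen before the code of `h`.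

A homogeneous second-countable space is covered by countably many homeomorphic copies of any
nonempty open set, so a homeomorphism of such a space of size `𝔠` moving some point moves `𝔠`
points. Since `ℵ₀ < cf 𝔠`, any countable cover of `X` has a piece of size `𝔠`, which therefore
is not homogeneous.
-/

open Cardinal Set Filter Topology TopologicalSpace

universe u

theorem Cardinal.mk_inter_preimage_le_of_injOn {α β : Type u} {f : α → β} {s : Set α}
    (hf : InjOn f s) (t : Set β) : #(s ∩ f ⁻¹' t : Set α) ≤ #t := by
  rw [← mk_image_eq_of_injOn f _ (hf.mono inter_subset_left), image_inter_preimage]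
  exact mk_le_mk_of_subset inter_subset_right

theorem exists_forall_notMem_image_Iio {K α : Type u} [LinearOrder K] [WellFoundedLT K]
    (hK : ∀ γ : K, #(Iio γ) < #α) (B : K → Set α → Set α)
    (hB : ∀ γ (P : Set α), #P < #α → #(B γ P) < #α) :
    ∃ x : K → α, ∀ γ, x γ ∉ B γ (x '' Iio γ) := by
  have hex : ∀ γ (P : Set α), #P < #α → ∃ a, a ∉ B γ P := fun γ P hP => by
    by_contra! h
    exact (hB γ P hP).ne (by rw [eq_univ_of_forall h, mk_univ])
  choose a ha using hex
  let x : K → α := wellFounded_lt.fix fun γ ih =>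
    a γ (range fun β : Iio γ => ih β β.2) (mk_range_le.trans_lt (hK γ))
  refine ⟨x, fun γ => ?_⟩
  have hx : x γ = a γ (x '' Iio γ) (mk_image_le.trans_lt (hK γ)) := by
    simp only [x, image_eq_range]
    exact wellFounded_lt.fix_eq _ γ
  rw [hx]
  apply ha

theorem exists_mk_eq_forall_mk_moved_lt {α ι : Type u} (hα : ℵ₀ ≤ #α) (hι : #ι = #α)
    (f : ι → α → α) (s : ι → Set α) (hf : ∀ i, InjOn (f i) (s i)) :
    ∃ X : Set α, #X = #α ∧
      ∀ i, #{z | z ∈ X ∧ z ∈ s i ∧ f i z ∈ X ∧ f i z ≠ z} < #α := by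
  obtain ⟨_, _, hord⟩ := Cardinal.exists_ord_eq_type_lt ι
  have hIio : ∀ i : ι, #(Iio i) < #α := fun i => hι ▸ mk_Iio_lt i hord
  have hIic : ∀ i : ι, #(Iic i) < #α := fun i => hι ▸ mk_Iic_lt i hord (hι ▸ hα)
  -- the point chosen at stage `γ` is not related to an earlier one by any `f i` with `i ≤ γ`
  let B : ι → Set α → Set α := fun γ P =>
    P ∪ ⋃ i ∈ Iic γ, (f i '' P ∪ s i ∩ f i ⁻¹' P)
  have hB : ∀ γ (P : Set α), #P < #α → #(B γ P) < #α := fun γ P hP => by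
    refine (mk_union_le _ _).trans_lt (add_lt_of_lt hα hP ?_)
    refine (mk_biUnion_le _ _).trans_lt (mul_lt_of_lt hα (hIic γ) ?_)
    refine (ciSup_le' fun i => ?_).trans_lt (add_lt_of_lt hα hP hP)
    exact (mk_union_le _ _).trans
      (add_le_add mk_image_le (mk_inter_preimage_le_of_injOn (hf i) P))
  obtain ⟨x, hx⟩ := exists_forall_notMem_image_Iio hIio B hB
  have hxinj : Function.Injective x := fun β γ hβγ => by
    by_contra hne
    rcases lt_or_gt_of_ne hne with hlt | hlt
    · exact hx γ (Or.inl ⟨β, hlt, hβγ⟩)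
    · exact hx β (Or.inl ⟨γ, hlt, hβγ.symm⟩)
  refine ⟨range x, by rw [mk_range_eq x hxinj, hι], fun i => ?_⟩
  have hsub : {z | z ∈ range x ∧ z ∈ s i ∧ f i z ∈ range x ∧ f i z ≠ z} ⊆
      x '' Iio i ∪ s i ∩ f i ⁻¹' (x '' Iio i) := by
    rintro _ ⟨⟨γ, rfl⟩, hs, ⟨δ, hδ⟩, hmove⟩
    rcases lt_or_ge γ i with hγ | hγ
    · exact Or.inl ⟨γ, hγ, rfl⟩
    rcases lt_or_ge δ i with hδi | hδi
    · exact Or.inr ⟨hs, δ, hδi, hδ⟩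
    rcases lt_or_gt_of_ne (fun h : γ = δ => hmove (h ▸ hδ.symm)) with hγδ | hδγ
    · exact (hx δ (Or.inr (mem_biUnion (show i ≤ δ from hδi)
        (Or.inl ⟨x γ, ⟨γ, hγδ, rfl⟩, hδ.symm⟩)))).elim
    · exact (hx γ (Or.inr (mem_biUnion (show i ≤ γ from hγ)
        (Or.inr ⟨hs, δ, hδγ, hδ⟩)))).elim
  have hP : #(x '' Iio i) < #α := mk_image_le.trans_lt (hIio i)
  calc _ ≤ #(x '' Iio i ∪ s i ∩ f i ⁻¹' (x '' Iio i) : Set α) := mk_le_mk_of_subset hsub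
    _ ≤ #(x '' Iio i) + #(x '' Iio i) :=
      (mk_union_le _ _).trans (add_le_add le_rfl (mk_inter_preimage_le_of_injOn (hf i) _))
    _ < #α := add_lt_of_lt hα hP hP

section SeqExtend

variable {α : Type*} [TopologicalSpace α] [Nonempty α]

/-- The continuous extension of `d n ↦ e n` to `closure (range d)`, wherever one exists. -/
noncomputable def seqExtend (d e : ℕ → α) (x : α) : α :=
  limUnder (𝓝[range d] x) (Function.extend d e id)

theorem seqExtend_eq [T2Space α] {Y : Set α} {f : Y → α} (hf : Continuous f) {d : ℕ → Y}
    (hd : DenseRange d) {e : ℕ → α} (he : ∀ n, e n = f (d n)) (y : Y) :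
    seqExtend (fun n => (d n : α)) e y = f y := by
  have hnhds : 𝓝[range fun n => (d n : α)] (y : α) = map (↑) (𝓝[range d] y) := by
    rw [IsEmbedding.subtypeVal.map_nhdsWithin_eq, ← range_comp]
    rfl
  have : (𝓝[range d] y).NeBot :=
    mem_closure_iff_nhdsWithin_neBot.mp (hd.closure_range ▸ mem_univ y)
  rw [seqExtend, hnhds]
  refine Tendsto.limUnder_eq ?_
  rw [tendsto_map'_iff]
  refine ((hf.tendsto y).mono_left nhdsWithin_le_nhds).congr' ?_
  filter_upwards [self_mem_nhdsWithin] with w hw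
  obtain ⟨n, rfl⟩ := hw
  classical
  have hex : ∃ m, (d m : α) = d n := ⟨n, rfl⟩
  rw [Function.comp_apply, Function.extend_def, dif_pos hex, he,
    Subtype.ext hex.choose_spec]

end SeqExtend

theorem exists_mk_eq_forall_homeomorph_mk_moved_lt {α : Type u} [TopologicalSpace α]
    [T2Space α] [SecondCountableTopology α] (hα : #α = 𝔠) :
    ∃ X : Set α, #X = 𝔠 ∧ ∀ Z ⊆ X, ∀ h : Z ≃ₜ Z, #{z | h z ≠ z} < 𝔠 := by
  have : Nonempty α := mk_ne_zero_iff.mp (hα ▸ continuum_ne_zero)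
  have hcodes : #((ℕ → α) × (ℕ → α)) = #α := by
    simp [hα, continuum_power_aleph0]
  obtain ⟨X, hX, hmoved⟩ := exists_mk_eq_forall_mk_moved_lt (hα ▸ aleph0_le_continuum) hcodes
    (fun c => seqExtend c.1 c.2) (fun c => {x | seqExtend c.2 c.1 (seqExtend c.1 c.2 x) = x})
    (fun c => LeftInvOn.injOn fun _ hx => hx)
  refine ⟨X, hX.trans hα, fun Z hZX h => ?_⟩
  rcases isEmpty_or_nonempty Z with hZ | hZ
  · simp [continuum_pos]
  obtain ⟨d, hd⟩ := exists_dense_seq Z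
  have hfwd (z : Z) : seqExtend (fun n => (d n : α)) (fun n => h (d n)) z = h z :=
    seqExtend_eq (continuous_subtype_val.comp h.continuous) hd (fun _ => rfl) z
  have hbwd (z : Z) : seqExtend (fun n => (h (d n) : α)) (fun n => d n) z = h.symm z :=
    seqExtend_eq (continuous_subtype_val.comp h.symm.continuous)
      (h.surjective.denseRange.comp hd h.continuous) (fun _ => by simp) z
  refine lt_of_le_of_lt ?_ ((hmoved (fun n => d n, fun n => h (d n))).trans_eq hα)
  rw [← mk_image_eq Subtype.val_injective]
  refine mk_le_mk_of_subset ?_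
  rintro _ ⟨z, hz, rfl⟩
  refine ⟨hZX z.2, ?_, ?_, ?_⟩
  · simp [hfwd, hbwd]
  · simp [hfwd, hZX (h z).2]
  · simpa [hfwd, Subtype.ext_iff] using hz

namespace IsHomogeneousSpace

variable {Y : Type u} [TopologicalSpace Y] [SecondCountableTopology Y]

theorem mk_le_aleph0_mul (hY : IsHomogeneousSpace Y) {U : Set Y} (hU : IsOpen U)
    (hne : U.Nonempty) : #Y ≤ ℵ₀ * #U := by
  obtain ⟨u, hu⟩ := hne
  obtain ⟨T, hTc, hT⟩ :=
    isOpen_iUnion_countable (fun h : Y ≃ₜ Y => h '' U) fun h => h.isOpenMap U hU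
  have hcover : ⋃ h ∈ T, h '' U = Set.univ := by
    refine hT.trans (eq_univ_of_forall fun y => ?_)
    obtain ⟨h, rfl⟩ := hY u y
    exact mem_iUnion.2 ⟨h, u, hu, rfl⟩
  calc #Y = #(⋃ h ∈ T, h '' U : Set Y) := by rw [hcover, mk_univ]
    _ ≤ #T * ⨆ h : T, #(h.1 '' U) := mk_biUnion_le _ _
    _ ≤ ℵ₀ * #U := mul_le_mul' hTc.le_aleph0 (ciSup_le' fun _ => mk_image_le)

theorem exists_mk_moved_eq [T2Space Y] (hY : IsHomogeneousSpace Y) (hcard : ℵ₀ < #Y) :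
    ∃ h : Y ≃ₜ Y, #{y | h y ≠ y} = #Y := by
  obtain ⟨x, y, hxy⟩ := one_lt_iff_nontrivial.mp (one_lt_aleph0.trans hcard)
  obtain ⟨h, hh⟩ := hY x y
  have hopen : IsOpen {y | h y ≠ y} := (isClosed_eq h.continuous continuous_id).isOpen_compl
  have hle := (hY.mk_le_aleph0_mul hopen ⟨x, hh.trans_ne hxy.symm⟩).trans (mul_le_max _ _)
  refine ⟨h, (mk_set_le _).antisymm ?_⟩
  simpa [not_le.mpr hcard] using hle

end IsHomogeneousSpace

theorem exists_mk_eq_continuum_of_iUnion {α : Type u} (Y : ℕ → Set α)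
    (hY : #(⋃ n, Y n) = 𝔠) : ∃ n, #(Y n) = 𝔠 := by
  by_contra! hne
  have hlt : ∀ n, #(Y n) < 𝔠 := fun n =>
    ((mk_le_mk_of_subset (subset_iUnion Y n)).trans hY.le).lt_of_ne (hne n)
  have hcof : ℵ₀ < (𝔠 : Cardinal.{u}).ord.cof := by
    simpa [two_power_aleph0] using lt_cof_ord_power (le_refl ℵ₀) one_lt_two
  have hunion := mk_iUnion_le_lift Y
  simp only [lift_uzero, mk_nat, lift_aleph0] at hunion
  refine hY.not_lt (hunion.trans_lt (mul_lt_of_lt aleph0_le_continuum aleph0_lt_continuum ?_))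
  exact lift_iSup_lt_of_lt_cof_ord (by simpa using hcof) hlt

/-- There is (in ZFC) a zero-dimensional separable metrizable space (equivalently, a
non-empty subspace of the Cantor space) that is not σ-homogeneous, i.e. it cannot be
written as a countable union of homogeneous subspaces. -/
theorem statement6 :
    ∃ X : Set (ℕ → Bool), X.Nonempty ∧
      ¬ ∃ Y : ℕ → Set (ℕ → Bool), (∀ n, Y n ⊆ X) ∧ X = ⋃ n, Y n ∧
        ∀ n, IsHomogeneousSpace (Y n) := by
  obtain ⟨X, hX, hmoved⟩ :=
    exists_mk_eq_forall_homeomorph_mk_moved_lt (α := ℕ → Bool) (by simp)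
  refine ⟨X, nonempty_coe_sort.mp (mk_ne_zero_iff.mp (hX ▸ continuum_ne_zero)), ?_⟩
  rintro ⟨Y, hYX, rfl, hY⟩
  obtain ⟨n, hn⟩ := exists_mk_eq_continuum_of_iUnion Y hX
  obtain ⟨h, hh⟩ := (hY n).exists_mk_moved_eq (hn ▸ aleph0_lt_continuum)
  exact (hmoved (Y n) (hYX n) h).ne (hh.trans hn)
end

section
/- Let X be a Bernstein subset of 2^ω that is rigid, and suppose Y = 2^ω \ X is homogeneous with |Y| ≥ 2. Then X is not 𝔠-hereditarily rigid; that is, there exists a 𝔠-crowded subspace of X admitting a self-homeomorphism different from the identity. -/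
open Set Function Topology Filter Cardinal

instance : PolishSpace (ℕ → Bool) where

instance Pi.perfectSpace {ι β : Type*} [Infinite ι] [TopologicalSpace β] [Nontrivial β] :
    PerfectSpace (ι → β) := by
  classical
  refine ⟨preperfect_iff_nhds.2 fun x _ U hU => ?_⟩
  rw [nhds_pi, Filter.mem_pi] at hU
  obtain ⟨I, hI, t, ht, htU⟩ := hU
  obtain ⟨i, hi⟩ := hI.infinite_compl.nonempty
  obtain ⟨b, hb⟩ := exists_ne (x i)
  refine ⟨update x i b, ⟨htU fun j hj => ?_, trivial⟩, fun h => hb (by simpa using congrFun h i)⟩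
  rw [update_of_ne (ne_of_mem_of_not_mem hj hi)]
  exact mem_of_mem_nhds (ht j)

theorem Continuous.perfect_range {α β : Type*} [TopologicalSpace α] [TopologicalSpace β]
    [CompactSpace β] [PerfectSpace β] [T2Space α] {f : β → α} (hf : Continuous f)
    (hinj : Injective f) : Perfect (range f) := by
  refine ⟨(isCompact_range hf).isClosed, preperfect_iff_nhds.2 ?_⟩
  rintro _ ⟨x, rfl⟩ U hU
  obtain ⟨y, hyU, hyx⟩ :=
    preperfect_iff_nhds.1 PerfectSpace.univ_preperfect x trivial _ (hf.continuousAt hU)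
  exact ⟨f y, ⟨hyU.1, mem_range_self y⟩, hinj.ne hyx⟩

theorem Dense.preperfect {α : Type*} [TopologicalSpace α] [T1Space α] [PerfectSpace α]
    {G : Set α} (hG : Dense G) : Preperfect G := by
  refine preperfect_iff_nhds.2 fun x _ V hV => ?_
  obtain ⟨W, hWV, hWo, hxW⟩ := mem_nhds_iff.1 hV
  obtain ⟨z, hzW, hzx⟩ :=
    preperfect_iff_nhds.1 PerfectSpace.univ_preperfect x trivial W (hWo.mem_nhds hxW)
  obtain ⟨y, ⟨hyW, hyx⟩, hyG⟩ :=
    hG.inter_open_nonempty _ (hWo.inter isOpen_compl_singleton) ⟨z, hzW.1, hzx⟩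
  exact ⟨y, ⟨hWV hyW, hyG⟩, hyx⟩

theorem Preperfect.perfectSpace_coe {α : Type*} [TopologicalSpace α] {s : Set α}
    (hs : Preperfect s) : PerfectSpace s := by
  refine ⟨preperfect_iff_nhds.2 fun x _ V hV => ?_⟩
  obtain ⟨u, hu, huV⟩ := (mem_nhds_subtype s x V).1 hV
  obtain ⟨y, ⟨hyu, hys⟩, hyx⟩ := preperfect_iff_nhds.1 hs x x.2 u hu
  exact ⟨⟨y, hys⟩, ⟨huV hyu, trivial⟩, fun h => hyx (congrArg Subtype.val h)⟩

theorem IsGδ.polishSpace {α : Type*} [TopologicalSpace α] [PolishSpace α] {s : Set α}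
    (hs : IsGδ s) : PolishSpace s := by
  obtain ⟨u, huo, rfl⟩ := isGδ_iff_eq_iInter_nat.1 hs
  have (n : ℕ) : PolishSpace (u n) := (huo n).polishSpace
  let φ : (⋂ n, u n : Set α) → ∀ n, u n := fun x n => ⟨x, mem_iInter.1 x.2 n⟩
  have hφ : Continuous φ := continuous_pi fun n => continuous_subtype_val.subtype_mk _
  have hrange : range φ = ⋂ n, {g | (g n : α) = g 0} := by
    ext g
    simp only [mem_range, mem_iInter, mem_ofPred_eq]
    refine ⟨by rintro ⟨x, rfl⟩ n; rfl, fun hg => ?_⟩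
    exact ⟨⟨g 0, mem_iInter.2 fun n => hg n ▸ (g n).2⟩, funext fun n => Subtype.ext (hg n).symm⟩
  refine (show IsClosedEmbedding φ from ⟨?_, ?_⟩).polishSpace
  · exact IsEmbedding.of_comp hφ (continuous_subtype_val.comp (continuous_apply 0))
      IsEmbedding.subtypeVal
  · exact hrange ▸ isClosed_iInter fun n => isClosed_eq
      (continuous_subtype_val.comp (continuous_apply n))
      (continuous_subtype_val.comp (continuous_apply 0))

theorem IsGδ.exists_nat_bool_injection_of_dense {α : Type*} [TopologicalSpace α] [PolishSpace α]
    [PerfectSpace α] {G U : Set α} (hG : IsGδ G) (hd : Dense G) (hU : IsOpen U)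
    (hne : (U ∩ G).Nonempty) :
    ∃ f : (ℕ → Bool) → α, Continuous f ∧ Injective f ∧ range f ⊆ U ∩ G := by
  have : PolishSpace (U ∩ G : Set α) := (hU.isGδ.inter hG).polishSpace
  have : PerfectSpace (U ∩ G : Set α) := (hd.preperfect.open_inter hU).perfectSpace_coe
  have : Nonempty (U ∩ G : Set α) := hne.to_subtype
  let := TopologicalSpace.upgradeIsCompletelyMetrizable (U ∩ G : Set α)
  obtain ⟨f, -, hfc, hfi⟩ :=
    (PerfectSpace.univ_perfect (U ∩ G : Set α)).exists_nat_bool_injection univ_nonempty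
  refine ⟨(↑) ∘ f, continuous_subtype_val.comp hfc, Subtype.val_injective.comp hfi, ?_⟩
  rintro _ ⟨x, rfl⟩
  exact (f x).2

def MeetsEveryCantorSet {α : Type*} [TopologicalSpace α] (X : Set α) : Prop :=
  ∀ f : (ℕ → Bool) → α, Continuous f → Injective f → (range f ∩ X).Nonempty

theorem MeetsEveryCantorSet.continuum_le_mk_range_inter {α : Type*} [TopologicalSpace α]
    {X : Set α} (hX : MeetsEveryCantorSet X) {f : (ℕ → Bool) → α} (hf : Continuous f)
    (hinj : Injective f) : 𝔠 ≤ #(range f ∩ X : Set α) := by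
  let π : (ℕ → Bool) × (ℕ → Bool) ≃ₜ (ℕ → Bool) :=
    Homeomorph.sumArrowHomeomorphProdArrow.symm.trans
      (Homeomorph.piCongrLeft (Y := fun _ => Bool) Equiv.natSumNatEquivNat)
  -- the Cantor sets `f (π ({x} × 2^ω))` are pairwise disjoint
  choose p hp using fun x => hX (fun y => f (π (x, y)))
    (hf.comp (π.continuous.comp (Continuous.prodMk_right x)))
    (hinj.comp (π.injective.comp (Prod.mk_right_injective x)))
  choose y hy using fun x => (hp x).1
  have hinjp : Injective fun x => (⟨p x, ⟨_, hy x⟩, (hp x).2⟩ : (range f ∩ X : Set α)) := by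
    intro x x' hxx'
    have := hinj.comp π.injective ((hy x).trans ((congrArg Subtype.val hxx').trans (hy x').symm))
    exact congrArg Prod.fst this
  have := lift_mk_le_lift_mk_of_injective hinjp
  rw [lift_uzero] at this
  exact le_of_eq_of_le (by simp) this

section Polish

variable {α : Type*} [TopologicalSpace α] [PolishSpace α] [PerfectSpace α] {X G U : Set α}

theorem MeetsEveryCantorSet.continuum_le_mk_inter (hX : MeetsEveryCantorSet X) (hG : IsGδ G)
    (hd : Dense G) (hU : IsOpen U) (hne : (U ∩ G).Nonempty) : 𝔠 ≤ #(U ∩ (G ∩ X) : Set α) := by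
  obtain ⟨f, hf, hinj, hfU⟩ := hG.exists_nat_bool_injection_of_dense hd hU hne
  refine (hX.continuum_le_mk_range_inter hf hinj).trans (mk_le_mk_of_subset ?_)
  exact fun x hx => ⟨(hfU hx.1).1, (hfU hx.1).2, hx.2⟩

theorem MeetsEveryCantorSet.dense_inter (hX : MeetsEveryCantorSet X) (hG : IsGδ G)
    (hd : Dense G) : Dense (G ∩ X) := by
  refine dense_iff_inter_open.2 fun U hU hne => ?_
  have := hX.continuum_le_mk_inter hG hd hU (hd.inter_open_nonempty U hU hne)
  exact nonempty_coe_sort.1 (mk_ne_zero_iff.1 (continuum_pos.trans_le this).ne')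

end Polish

theorem MeetsEveryCantorSet.setCCrowded_inter {X G : Set (ℕ → Bool)} (hX : MeetsEveryCantorSet X)
    (hG : IsGδ G) (hd : Dense G) : SetCCrowded (G ∩ X) := by
  refine ⟨(hX.dense_inter hG hd).nonempty, fun U hU hne => le_antisymm ?_ ?_⟩
  · exact (mk_set_le _).trans_eq (by simp)
  · exact hX.continuum_le_mk_inter hG hd hU
      (hne.mono (inter_subset_inter_right _ inter_subset_left))

theorem ContinuousOn.isGδ_inter_preimage {α β : Type*} [TopologicalSpace α] [TopologicalSpace β]
    {f : α → β} {s : Set α} {t : Set β} (hf : ContinuousOn f s) (hs : IsGδ s) (ht : IsGδ t) :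
    IsGδ (s ∩ f ⁻¹' t) := by
  obtain ⟨v, hvo, rfl⟩ := isGδ_iff_eq_iInter_nat.1 ht
  choose u huo hu using fun n => continuousOn_iff'.1 hf (v n) (hvo n)
  rw [preimage_iInter, inter_iInter, iInter_congr fun n => (inter_comm _ _).trans (hu n)]
  exact .iInter fun n => (huo n).isGδ.inter hs

theorem ContinuousOn.isGδ_setOf_apply_eq {α : Type*} [TopologicalSpace α] [T2Space α]
    [PerfectlyNormalSpace (α × α)] {φ : α → α} {s : Set α} (hφ : ContinuousOn φ s)
    (hs : IsGδ s) : IsGδ {x ∈ s | φ x = x} :=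
  (hφ.prodMk continuousOn_id).isGδ_inter_preimage hs (isClosed_diagonal (X := α)).isGδ

theorem IsGδ.exists_isGδ_maximal_invariant {α : Type*} [TopologicalSpace α] {T : Set α}
    (hT : IsGδ T) {F G : α → α} (hF : ContinuousOn F T) (hG : ContinuousOn G T) :
    ∃ S ⊆ T, IsGδ S ∧ MapsTo F S S ∧ MapsTo G S S ∧
      ∀ Y ⊆ T, MapsTo F Y Y → MapsTo G Y Y → Y ⊆ S := by
  let E : ℕ → Set α := fun n => Nat.rec T (fun _ E => E ∩ F ⁻¹' E ∩ G ⁻¹' E) n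
  have hET : ∀ n, E n ⊆ T := fun n => by
    induction n with
    | zero => exact subset_rfl
    | succ n ih => exact inter_subset_left.trans (inter_subset_left.trans ih)
  have hE : ∀ n, IsGδ (E n) := fun n => by
    induction n with
    | zero => exact hT
    | succ n ih =>
      exact (hG.mono (inter_subset_left.trans (hET n))).isGδ_inter_preimage
        ((hF.mono (hET n)).isGδ_inter_preimage ih ih) ih
  refine ⟨⋂ n, E n, (iInter_subset E 0).trans (hET 0), .iInter hE, ?_, ?_, ?_⟩
  · exact fun x hx => mem_iInter.2 fun n => (mem_iInter.1 hx (n + 1)).1.2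
  · exact fun x hx => mem_iInter.2 fun n => (mem_iInter.1 hx (n + 1)).2
  · intro Y hYT hFY hGY
    refine subset_iInter fun n => ?_
    induction n with
    | zero => exact hYT
    | succ n ih => exact fun y hy => ⟨⟨ih hy, ih (hFY hy)⟩, ih (hGY hy)⟩

theorem exists_isGδ_continuousOn_extension {α ι D : Type*} [TopologicalSpace α]
    [PerfectlyNormalSpace α] [Countable ι] [TopologicalSpace D] [DiscreteTopology D] [Nonempty D]
    {Y : Set α} (f : Y → ι → D) (hf : Continuous f) :
    ∃ G, IsGδ G ∧ Y ⊆ G ∧ ∃ F : α → ι → D, ContinuousOn F G ∧ ∀ y : Y, F y = f y := by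
  -- `V i d` is an open set meeting `Y` exactly where the `i`-th coordinate of `f` is `d`
  choose V hVo hVf using fun i d =>
    isOpen_induced_iff.1 ((isOpen_discrete {d}).preimage ((continuous_apply i).comp hf))
  have hmemV (y : Y) (i : ι) : (y : α) ∈ V i (f y i) := by
    change y ∈ ((↑) ⁻¹' V i (f y i) : Set Y)
    rw [hVf]
    rfl
  have huniq {x : α} {i : ι} {d d' : D} (hx : x ∈ closure Y) (hd : x ∈ V i d)
      (hd' : x ∈ V i d') : d = d' := by
    obtain ⟨z, ⟨hzd, hzd'⟩, hzY⟩ :=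
      mem_closure_iff.1 hx _ ((hVo i d).inter (hVo i d')) ⟨hd, hd'⟩
    have h1 : (⟨z, hzY⟩ : Y) ∈ ((↑) ⁻¹' V i d : Set Y) := hzd
    have h2 : (⟨z, hzY⟩ : Y) ∈ ((↑) ⁻¹' V i d' : Set Y) := hzd'
    rw [hVf] at h1 h2
    exact h1.symm.trans h2
  let F : α → ι → D := fun x i => Classical.epsilon fun d => x ∈ V i d
  have hF {x : α} {i : ι} {d : D} (hx : x ∈ closure Y) (hd : x ∈ V i d) : F x i = d :=
    huniq hx (Classical.epsilon_spec (p := fun d => x ∈ V i d) ⟨d, hd⟩) hd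
  refine ⟨closure Y ∩ ⋂ i, ⋃ d, V i d,
    isClosed_closure.isGδ.inter (.iInter fun i => (isOpen_iUnion (hVo i)).isGδ),
    fun y hy => ⟨subset_closure hy, mem_iInter.2 fun i => mem_iUnion.2 ⟨_, hmemV ⟨y, hy⟩ i⟩⟩,
    F, fun x hx => ?_, fun y => funext fun i => hF (subset_closure y.2) (hmemV y i)⟩
  refine continuousWithinAt_pi.2 fun i => ?_
  obtain ⟨d, hd⟩ := mem_iUnion.1 (mem_iInter.1 hx.2 i)
  refine (continuousWithinAt_const (b := d)).congr_of_eventuallyEq ?_ (hF hx.1 hd)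
  filter_upwards [inter_mem_nhdsWithin _ ((hVo i d).mem_nhds hd)] with z hz
  exact hF hz.1.1 hz.2

theorem exists_partialHomeomorph_extension {ι D : Type*} [Countable ι] [TopologicalSpace D]
    [DiscreteTopology D] [Nonempty D] {Y : Set (ι → D)} (h : Y ≃ₜ Y) :
    ∃ e : PartialHomeomorph (ι → D) (ι → D),
      IsGδ e.source ∧ e.target = e.source ∧ Y ⊆ e.source ∧ ∀ y : Y, e y = h y := by
  obtain ⟨A, hA, hYA, F, hFc, hF⟩ :=
    exists_isGδ_continuousOn_extension (fun y => (h y : ι → D))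
      (continuous_subtype_val.comp h.continuous)
  obtain ⟨B, hB, hYB, G, hGc, hG⟩ :=
    exists_isGδ_continuousOn_extension (fun y => (h.symm y : ι → D))
      (continuous_subtype_val.comp h.symm.continuous)
  let T := {x ∈ A ∩ F ⁻¹' B | G (F x) = x} ∩ {x ∈ B ∩ G ⁻¹' A | F (G x) = x}
  have hT : IsGδ T :=
    ((hGc.comp (hFc.mono inter_subset_left) fun _ hx => hx.2).isGδ_setOf_apply_eq
        (hFc.isGδ_inter_preimage hA hB)).inter
      ((hFc.comp (hGc.mono inter_subset_left) fun _ hx => hx.2).isGδ_setOf_apply_eq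
        (hGc.isGδ_inter_preimage hB hA))
  have hFY : MapsTo F Y Y := fun y hy => (hF ⟨y, hy⟩).symm ▸ (h ⟨y, hy⟩).2
  have hGY : MapsTo G Y Y := fun y hy => (hG ⟨y, hy⟩).symm ▸ (h.symm ⟨y, hy⟩).2
  have hYT : Y ⊆ T := fun y hy => by
    refine ⟨⟨⟨hYA hy, hYB (hFY hy)⟩, ?_⟩, ⟨⟨hYB hy, hYA (hGY hy)⟩, ?_⟩⟩
    · rw [hF ⟨y, hy⟩, hG, h.symm_apply_apply]
    · rw [hG ⟨y, hy⟩, hF, h.apply_symm_apply]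
  obtain ⟨S, hST, hS, hFS, hGS, hmax⟩ := hT.exists_isGδ_maximal_invariant
    (hFc.mono fun x hx => hx.1.1.1) (hGc.mono fun x hx => hx.2.1.1)
  refine ⟨⟨⟨F, G, S, S, fun x hx => hFS hx, fun x hx => hGS hx, fun x hx => (hST hx).1.2,
      fun x hx => (hST hx).2.2⟩, hFc.mono fun x hx => (hST hx).1.1.1,
      hGc.mono fun x hx => (hST hx).2.1.1⟩, hS, rfl, hmax Y hYT hFY hGY, hF⟩

theorem PartialHomeomorph.image_source_diff {α β : Type*} [TopologicalSpace α]
    [TopologicalSpace β] (e : PartialHomeomorph α β) {Y : Set α} (hY : Y ⊆ e.source) :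
    e '' (e.source \ Y) = e.target \ e '' Y := by
  rw [e.injOn.image_sdiff, e.image_source_eq_target, inter_eq_right.2 hY]

theorem statement7_general (X : Set (ℕ → Bool))
    (hBernstein : ∀ K : Set (ℕ → Bool), Perfect K → K.Nonempty →
      (K ∩ X).Nonempty ∧ (K ∩ Xᶜ).Nonempty)
    (hhom : IsHomogeneousSpace ↥(Xᶜ))
    (hY2 : ∃ a b : ↥(Xᶜ), a ≠ b) :
    ∃ S : Set (ℕ → Bool), S ⊆ X ∧ SetCCrowded S ∧ ∃ h : S ≃ₜ S, ∃ a : S, h a ≠ a := by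
  have hX : MeetsEveryCantorSet X := fun f hf hinj =>
    (hBernstein _ (hf.perfect_range hinj) (range_nonempty f)).1
  have hY : MeetsEveryCantorSet Xᶜ := fun f hf hinj =>
    (hBernstein _ (hf.perfect_range hinj) (range_nonempty f)).2
  obtain ⟨a, b, hab⟩ := hY2
  obtain ⟨h, rfl⟩ := hhom a b
  obtain ⟨e, hGδ, htarget, hYe, he⟩ := exists_partialHomeomorph_extension h
  have hdense : Dense e.source := by
    simpa using (hY.dense_inter IsGδ.univ dense_univ).mono (inter_subset_right.trans hYe)
  have hYimage : e '' Xᶜ = Xᶜ := by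
    rw [← Subtype.range_coe (s := Xᶜ), ← range_comp, show e ∘ (↑) = (↑) ∘ h from funext he,
      h.surjective.range_comp]
  have hSimage : e '' (e.source ∩ X) = e.source ∩ X := by
    rw [← Set.sdiff_compl, e.image_source_diff hYe, hYimage, htarget]
  refine ⟨e.source ∩ X, inter_subset_right, hX.setCCrowded_inter hGδ hdense,
    e.homeomorphOfImageSubsetSource inter_subset_left hSimage, ?_⟩
  by_contra! hid
  have hid' : EqOn e id e.source :=
    EqOn.of_subset_closure (fun x hx => congrArg Subtype.val (hid ⟨x, hx⟩)) e.continuousOn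
      continuousOn_id inter_subset_left ((hX.dense_inter hGδ hdense).closure_eq ▸ subset_univ _)
  exact hab (Subtype.ext ((hid' (hYe a.2)).symm.trans (he a)))

/-- If `X ⊆ 2^ω` is Bernstein and rigid while its complement is homogeneous with at least
two points, then `X` is not `𝔠`-hereditarily rigid: some `𝔠`-crowded subspace of `X` has a
self-homeomorphism other than the identity. -/
theorem statement7 (X : Set (ℕ → Bool))
    (hBernstein : ∀ K : Set (ℕ → Bool), Perfect K → K.Nonempty →
      (K ∩ X).Nonempty ∧ (K ∩ Xᶜ).Nonempty)
    (hrigid : (∃ a b : X, a ≠ b) ∧ ∀ h : X ≃ₜ X, ∀ a : X, h a = a)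
    (hhom : IsHomogeneousSpace ↥(Xᶜ))
    (hY2 : ∃ a b : ↥(Xᶜ), a ≠ b) :
    ∃ S : Set (ℕ → Bool), S ⊆ X ∧ SetCCrowded S ∧ ∃ h : S ≃ₜ S, ∃ a : S, h a ≠ a :=
  statement7_general X hBernstein hhom hY2
end

section
/- Let Z be an uncountable zero-dimensional Polish space and let 1 ≤ η < ω₁, 1 ≤ ξ < ω₁. Then the class D_η(Σ⁰_ξ(Z)) of η-differences of Σ⁰_ξ sets is a non-selfdual Wadge class in Z. -/
/-- The additive Borel classes `Σ⁰_ξ(Z)`: `Σ⁰₁` is the class of open sets, and for `ξ > 1`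
a set is `Σ⁰_ξ` iff it is a countable union of complements of sets in classes `Σ⁰_{ξₙ}`
with `1 ≤ ξₙ < ξ` (open sets are allowed throughout). -/
noncomputable def SigmaClass (Z : Type*) [TopologicalSpace Z] : Ordinal → Set (Set Z) :=
  Ordinal.lt_wf.fix fun ξ ih =>
    {A | IsOpen A} ∪
      {A | ∃ (g : ℕ → {o : Ordinal // o < ξ}) (f : ℕ → Set Z),
        (∀ n, 1 ≤ (g n : Ordinal) ∧ f n ∈ ih (g n) (g n).2) ∧ A = ⋃ n, (f n)ᶜ}

/-- An ordinal is even iff its finite part (its residue modulo `ω`) is even. -/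
def OrdEven (o : Ordinal) : Prop := Even (o % Ordinal.omega0)

/-- The `η`-difference of the sequence of sets `A`: the union of `A μ \ ⋃_{ζ < μ} A ζ`
over all `μ < η` whose parity is opposite to that of `η`. -/
def DiffKernel {Z : Type*} (η : Ordinal) (A : Ordinal → Set Z) : Set Z :=
  {z | ∃ μ, μ < η ∧ (OrdEven μ ↔ ¬ OrdEven η) ∧ z ∈ A μ ∧ ∀ ζ, ζ < μ → z ∉ A ζ}

/-- The class `D_η(Σ⁰_ξ(Z))` of `η`-differences of `Σ⁰_ξ` subsets of `Z`. -/
noncomputable def DiffClass (η ξ : Ordinal) (Z : Type*) [TopologicalSpace Z] :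
    Set (Set Z) :=
  {B | ∃ A : Ordinal → Set Z, (∀ μ, μ < η → A μ ∈ SigmaClass Z ξ) ∧ B = DiffKernel η A}

/-- Wadge reducibility: `A ≤ B` iff `A` is a continuous preimage of `B`. -/
def WadgeLE {Z : Type*} [TopologicalSpace Z] (A B : Set Z) : Prop :=
  ∃ f : Z → Z, Continuous f ∧ A = f ⁻¹' B


/-!
Every class `D_η(Σ⁰_ξ)` is closed under continuous preimages, so the point is to find a complete
set. As `η` and `ξ` are countable, a recursion on `ξ` that packs countably many codes into one point
of Cantor space via `Nat.pair` yields a set `U ⊆ 2^ℕ × 2^ℕ` in `D_η(Σ⁰_ξ)` whose sections are exactly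
the `D_η(Σ⁰_ξ)` subsets of `2^ℕ`. Sets of these classes extend along topological embeddings. A
zero-dimensional second countable `Z` embeds into `2^ℕ` by some `e`, and an uncountable Polish `Z`
contains a copy `j` of `2^ℕ × 2^ℕ`. If `A ⊆ Z` extends `U` along `j`, then each `D_η(Σ⁰_ξ)` set of
`Z` has the form `e⁻¹ U_c` and reduces to `A` via `z ↦ j (c, e z)`. Non-selfduality is Cantor's
diagonal argument: the complement of `{x | (x, x) ∈ U}` is not a section of `U`.
-/
open Set Topology TopologicalSpace

section SigmaClass

variable {X Y : Type*} [TopologicalSpace X] [TopologicalSpace Y]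

theorem mem_sigmaClass_iff {ξ : Ordinal} {A : Set X} :
    A ∈ SigmaClass X ξ ↔ IsOpen A ∨ ∃ (g : ℕ → Ordinal) (f : ℕ → Set X),
      (∀ n, 1 ≤ g n ∧ g n < ξ ∧ f n ∈ SigmaClass X (g n)) ∧ A = ⋃ n, (f n)ᶜ := by
  have hfix : SigmaClass X ξ = {A | IsOpen A} ∪
      {A | ∃ (g : ℕ → {o : Ordinal // o < ξ}) (f : ℕ → Set X),
        (∀ n, 1 ≤ (g n : Ordinal) ∧ f n ∈ SigmaClass X (g n)) ∧ A = ⋃ n, (f n)ᶜ} := by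
    unfold SigmaClass
    exact WellFounded.fix_eq _ _ _
  rw [hfix]
  refine or_congr Iff.rfl ⟨?_, ?_⟩
  · rintro ⟨g, f, hgf, rfl⟩
    exact ⟨fun n => g n, f, fun n => ⟨(hgf n).1, (g n).2, (hgf n).2⟩, rfl⟩
  · rintro ⟨g, f, hgf, rfl⟩
    exact ⟨fun n => ⟨g n, (hgf n).2.1⟩, f, fun n => ⟨(hgf n).1, (hgf n).2.2⟩, rfl⟩

theorem isOpen_mem_sigmaClass {ξ : Ordinal} {A : Set X} (hA : IsOpen A) :
    A ∈ SigmaClass X ξ :=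
  mem_sigmaClass_iff.2 (Or.inl hA)

theorem iUnion_compl_mem_sigmaClass {ξ : Ordinal} {g : ℕ → Ordinal} {f : ℕ → Set X}
    (hg : ∀ n, 1 ≤ g n ∧ g n < ξ) (hf : ∀ n, f n ∈ SigmaClass X (g n)) :
    ⋃ n, (f n)ᶜ ∈ SigmaClass X ξ :=
  mem_sigmaClass_iff.2 (Or.inr ⟨g, f, fun n => ⟨(hg n).1, (hg n).2, hf n⟩, rfl⟩)

theorem mem_sigmaClass_iff_isOpen {ξ : Ordinal} (hξ : ξ ≤ 1) {A : Set X} :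
    A ∈ SigmaClass X ξ ↔ IsOpen A := by
  refine ⟨fun hA => ?_, isOpen_mem_sigmaClass⟩
  rcases mem_sigmaClass_iff.1 hA with hA | ⟨g, _, hg, _⟩
  · exact hA
  · exact absurd ((hg 0).1.trans_lt ((hg 0).2.1.trans_le hξ)) (lt_irrefl 1)

theorem exists_iUnion_compl_of_mem_sigmaClass [PerfectlyNormalSpace X] {ξ : Ordinal}
    (hξ : 1 < ξ) {A : Set X} (hA : A ∈ SigmaClass X ξ) :
    ∃ (g : ℕ → Ordinal) (f : ℕ → Set X),
      (∀ n, 1 ≤ g n ∧ g n < ξ ∧ f n ∈ SigmaClass X (g n)) ∧ A = ⋃ n, (f n)ᶜ := by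
  rcases mem_sigmaClass_iff.1 hA with hA | hA
  · obtain ⟨f, hf, hAf⟩ := isGδ_iff_eq_iInter_nat.1 hA.isClosed_compl.isGδ
    refine ⟨fun _ => 1, f, fun n => ⟨le_rfl, hξ, isOpen_mem_sigmaClass (hf n)⟩, ?_⟩
    rw [← compl_iInter, ← hAf, compl_compl]
  · exact hA

theorem preimage_mem_sigmaClass {f : X → Y} (hf : Continuous f) (ξ : Ordinal) {S : Set Y}
    (hS : S ∈ SigmaClass Y ξ) : f ⁻¹' S ∈ SigmaClass X ξ := by
  induction ξ using WellFoundedLT.induction generalizing S with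
  | _ ξ ih =>
    rcases mem_sigmaClass_iff.1 hS with hS | ⟨g, s, hgs, rfl⟩
    · exact isOpen_mem_sigmaClass (hS.preimage hf)
    · rw [preimage_iUnion]
      exact iUnion_compl_mem_sigmaClass (fun n => ⟨(hgs n).1, (hgs n).2.1⟩)
        fun n => ih _ (hgs n).2.1 (hgs n).2.2

theorem Topology.IsInducing.exists_preimage_eq_of_mem_sigmaClass {j : X → Y}
    (hj : IsInducing j) (ξ : Ordinal) {S : Set X} (hS : S ∈ SigmaClass X ξ) :
    ∃ S' ∈ SigmaClass Y ξ, j ⁻¹' S' = S := by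
  induction ξ using WellFoundedLT.induction generalizing S with
  | _ ξ ih =>
    rcases mem_sigmaClass_iff.1 hS with hS | ⟨g, s, hgs, rfl⟩
    · obtain ⟨O, hO, rfl⟩ := hj.isOpen_iff.1 hS
      exact ⟨O, isOpen_mem_sigmaClass hO, rfl⟩
    · choose s' hs' hss' using fun n => ih _ (hgs n).2.1 (hgs n).2.2
      refine ⟨⋃ n, (s' n)ᶜ, iUnion_compl_mem_sigmaClass
        (fun n => ⟨(hgs n).1, (hgs n).2.1⟩) hs', ?_⟩
      simp only [preimage_iUnion, preimage_compl, hss']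

end SigmaClass

theorem diffKernel_congr {X : Type*} {η : Ordinal} {A B : Ordinal → Set X}
    (h : ∀ μ < η, A μ = B μ) : DiffKernel η A = DiffKernel η B := by
  ext z
  refine exists_congr fun μ => ⟨?_, ?_⟩
  · rintro ⟨hμ, hpar, hz, hmin⟩
    exact ⟨hμ, hpar, h μ hμ ▸ hz, fun ζ hζ => h ζ (hζ.trans hμ) ▸ hmin ζ hζ⟩
  · rintro ⟨hμ, hpar, hz, hmin⟩
    exact ⟨hμ, hpar, (h μ hμ).symm ▸ hz, fun ζ hζ => (h ζ (hζ.trans hμ)).symm ▸ hmin ζ hζ⟩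

section DiffClass

variable {X Y : Type*} [TopologicalSpace X] [TopologicalSpace Y]

theorem preimage_mem_diffClass {f : X → Y} (hf : Continuous f) {η ξ : Ordinal} {B : Set Y}
    (hB : B ∈ DiffClass η ξ Y) : f ⁻¹' B ∈ DiffClass η ξ X := by
  obtain ⟨A, hA, rfl⟩ := hB
  exact ⟨fun μ => f ⁻¹' A μ, fun μ hμ => preimage_mem_sigmaClass hf ξ (hA μ hμ), rfl⟩

theorem Topology.IsInducing.exists_preimage_eq_of_mem_diffClass {j : X → Y}
    (hj : IsInducing j) {η ξ : Ordinal} {B : Set X} (hB : B ∈ DiffClass η ξ X) :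
    ∃ B' ∈ DiffClass η ξ Y, j ⁻¹' B' = B := by
  obtain ⟨A, hA, rfl⟩ := hB
  choose! A' hA' hAA' using fun μ hμ => hj.exists_preimage_eq_of_mem_sigmaClass ξ (hA μ hμ)
  exact ⟨DiffKernel η A', ⟨A', hA', rfl⟩, diffKernel_congr hAA'⟩

end DiffClass

theorem countable_Iio_of_lt_ord_aleph_one {η : Ordinal} (hη : η < (Cardinal.aleph 1).ord) :
    (Iio η).Countable := by
  rw [← Cardinal.le_aleph0_iff_set_countable, Cardinal.mk_Iio_ordinal, Cardinal.lift_le_aleph0,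
    ← Cardinal.lt_aleph_one_iff]
  exact Cardinal.lt_ord.1 hη

def unpack (c : ℕ → Bool) (k : ℕ) : ℕ → Bool := fun i => c (Nat.pair k i)

@[fun_prop]
theorem continuous_unpack : Continuous unpack :=
  continuous_pi fun _ => continuous_pi fun _ => continuous_apply _

theorem surjective_unpack : Function.Surjective unpack :=
  fun d => ⟨fun j => d j.unpair.1 j.unpair.2, by ext k i; simp [unpack]⟩

def sections {P X : Type*} (U : Set (P × X)) : Set (Set X) :=
  range fun c => Prod.mk c ⁻¹' U

theorem compl_diagonal_notMem_sections {α : Type*} (U : Set (α × α)) :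
    {x | (x, x) ∈ U}ᶜ ∉ sections U := by
  rintro ⟨c, hc⟩
  exact iff_not_self (Set.ext_iff.1 hc c)

section Universal

variable {X : Type*} [TopologicalSpace X]

theorem exists_universal_isOpen {W : ℕ → Set X} (hW : IsTopologicalBasis (range W)) :
    ∃ U : Set ((ℕ → Bool) × X), IsOpen U ∧ {S | IsOpen S} ⊆ sections U := by
  classical
  refine ⟨⋃ n, ((fun c : ℕ → Bool => c n) ⁻¹' {true}) ×ˢ W n,
    isOpen_iUnion fun n => ((isOpen_discrete _).preimage (continuous_apply n)).prod
      (hW.isOpen (mem_range_self n)), fun S hS => ⟨fun n => decide (W n ⊆ S), ?_⟩⟩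
  ext x
  simp only [mem_preimage, mem_iUnion, mem_prod, mem_singleton_iff, decide_eq_true_eq]
  refine ⟨fun ⟨n, hn, hx⟩ => hn hx, fun hx => ?_⟩
  obtain ⟨_, ⟨n, rfl⟩, hxn, hn⟩ := hW.exists_subset_of_mem_open hx hS
  exact ⟨n, hn, hxn⟩

/-- Column `k` of a code is read as a code for a section of `V k.unpair.2`, so that every `V m`
is used by infinitely many columns. -/
def iUnionComplCode (V : ℕ → Set ((ℕ → Bool) × X)) : Set ((ℕ → Bool) × X) :=
  ⋃ k, {q | (unpack q.1 k, q.2) ∉ V k.unpair.2}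

theorem iUnionComplCode_mem_sigmaClass {ξ : Ordinal} {p : ℕ → Ordinal}
    (hp : ∀ m, 1 ≤ p m ∧ p m < ξ) {V : ℕ → Set ((ℕ → Bool) × X)}
    (hV : ∀ m, V m ∈ SigmaClass ((ℕ → Bool) × X) (p m)) :
    iUnionComplCode V ∈ SigmaClass ((ℕ → Bool) × X) ξ :=
  iUnion_compl_mem_sigmaClass (fun k => hp k.unpair.2) fun k =>
    preimage_mem_sigmaClass (by fun_prop) _ (hV k.unpair.2)

theorem sigmaClass_subset_sections_iUnionComplCode [PerfectlyNormalSpace X] {ξ : Ordinal}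
    (hξ : 1 < ξ) {p : ℕ → Ordinal} (hp : range p = Ico 1 ξ) {V : ℕ → Set ((ℕ → Bool) × X)}
    (hV : ∀ m, SigmaClass X (p m) ⊆ sections (V m)) :
    SigmaClass X ξ ⊆ sections (iUnionComplCode V) := by
  classical
  intro S hS
  obtain ⟨g, f, hgf, rfl⟩ := exists_iUnion_compl_of_mem_sigmaClass hξ hS
  let F n m := if p m = g n then f n else univ
  have hF : ∀ n m, F n m ∈ SigmaClass X (p m) := fun n m => by
    by_cases h : p m = g n
    · simpa [F, h] using (hgf n).2.2
    · simpa [F, h] using isOpen_mem_sigmaClass (ξ := p m) isOpen_univ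
  choose d hd using fun n m => hV m (hF n m)
  obtain ⟨c, hc⟩ := surjective_unpack fun k => d k.unpair.1 k.unpair.2
  refine ⟨c, ?_⟩
  have hcol : ∀ k, Prod.mk (unpack c k) ⁻¹' V k.unpair.2 = F k.unpair.1 k.unpair.2 := by
    intro k
    rw [hc]
    exact hd _ _
  have hrow : ∀ n, ⋃ m, (F n m)ᶜ = (f n)ᶜ := by
    intro n
    obtain ⟨m, hm⟩ : g n ∈ range p := hp ▸ ⟨(hgf n).1, (hgf n).2.1⟩
    refine subset_antisymm (iUnion_subset fun m' => ?_)
      (subset_iUnion_of_subset m (by simp [F, hm]))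
    by_cases h : p m' = g n <;> simp [F, h]
  calc Prod.mk c ⁻¹' iUnionComplCode V = ⋃ k : ℕ, (F k.unpair.1 k.unpair.2)ᶜ := by
        rw [iUnionComplCode, preimage_iUnion]
        exact iUnion_congr fun k => congrArg compl (hcol k)
    _ = ⋃ n, (f n)ᶜ := by rw [iUnion_unpair fun n m => (F n m)ᶜ]; exact iUnion_congr hrow

theorem exists_universal_sigmaClass [PerfectlyNormalSpace X] {W : ℕ → Set X}
    (hW : IsTopologicalBasis (range W)) (ξ : Ordinal) (hξ : ξ < (Cardinal.aleph 1).ord) :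
    ∃ U ∈ SigmaClass ((ℕ → Bool) × X) ξ, SigmaClass X ξ ⊆ sections U := by
  induction ξ using WellFoundedLT.induction with
  | _ ξ ih =>
    rcases le_or_gt ξ 1 with h1 | h1
    · obtain ⟨U, hUo, hU⟩ := exists_universal_isOpen hW
      exact ⟨U, isOpen_mem_sigmaClass hUo, fun S hS => hU (mem_sigmaClass_iff_isOpen h1 |>.1 hS)⟩
    · obtain ⟨p, hp⟩ := ((countable_Iio_of_lt_ord_aleph_one hξ).mono
        Ico_subset_Iio_self).exists_eq_range (nonempty_Ico.2 h1)
      have hpξ : ∀ m, 1 ≤ p m ∧ p m < ξ := fun m => by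
        rw [← mem_Ico, hp]
        exact mem_range_self m
      choose V hV hVuniv using fun m => ih (p m) (hpξ m).2 ((hpξ m).2.trans hξ)
      exact ⟨_, iUnionComplCode_mem_sigmaClass hpξ hV,
        sigmaClass_subset_sections_iUnionComplCode h1 hp.symm hVuniv⟩

theorem exists_universal_diffClass {η ξ : Ordinal} (hη : η < (Cardinal.aleph 1).ord)
    {V : Set ((ℕ → Bool) × X)} (hV : V ∈ SigmaClass ((ℕ → Bool) × X) ξ)
    (hVuniv : SigmaClass X ξ ⊆ sections V) :
    ∃ U ∈ DiffClass η ξ ((ℕ → Bool) × X), DiffClass η ξ X ⊆ sections U := by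
  obtain ⟨q, hq⟩ := countable_iff_exists_subset_range.1 (countable_Iio_of_lt_ord_aleph_one hη)
  choose! idx hidx using fun μ (hμ : μ ∈ Iio η) => (hq hμ : ∃ n, q n = μ)
  refine ⟨DiffKernel η fun μ => {p | (unpack p.1 (idx μ), p.2) ∈ V},
    ⟨_, fun μ _ => preimage_mem_sigmaClass (by fun_prop) ξ hV, rfl⟩, ?_⟩
  rintro _ ⟨A, hA, rfl⟩
  choose! a ha using fun μ hμ => hVuniv (hA μ hμ)
  obtain ⟨c, hc⟩ := surjective_unpack fun n => a (q n)
  refine ⟨c, diffKernel_congr fun μ hμ => ?_⟩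
  show Prod.mk (unpack c (idx μ)) ⁻¹' V = A μ
  rw [hc]
  dsimp only
  rw [hidx μ hμ]
  exact ha μ hμ

end Universal

section ZeroDimensional

variable {X : Type*} [TopologicalSpace X]

theorem exists_seq_isClopen_basis [SecondCountableTopology X]
    (hX : ∃ B : Set (Set X), IsTopologicalBasis B ∧ ∀ U ∈ B, IsClopen U) :
    ∃ W : ℕ → Set X, (∀ n, IsClopen (W n)) ∧ IsTopologicalBasis (range W) := by
  obtain ⟨B, hB, hBc⟩ := hX
  obtain ⟨s, hsB, hsc, hs⟩ := hB.exists_countable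
  obtain ⟨W, hW⟩ := (hsc.insert ∅).exists_eq_range (insert_nonempty _ _)
  refine ⟨W, fun n => ?_, hW ▸ hs.insert_empty⟩
  rcases (hW ▸ mem_range_self n : W n ∈ insert ∅ s) with h | h
  · exact h ▸ isClopen_empty
  · exact hBc _ (hsB h)

theorem isInducing_boolIndicator {W : ℕ → Set X} (hWc : ∀ n, IsClopen (W n))
    (hW : IsTopologicalBasis (range W)) : IsInducing fun x n => (W n).boolIndicator x := by
  have hcont : Continuous fun x n => (W n).boolIndicator x :=
    continuous_pi fun n => (continuous_boolIndicator_iff_isClopen _).2 (hWc n)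
  refine ⟨le_antisymm (continuous_iff_le_induced.1 hcont)
    (TopologicalSpace.le_def.2 fun O hO => ?_)⟩
  refine isOpen_induced_iff.2 ⟨⋃ n ∈ {n | W n ⊆ O}, (fun c : ℕ → Bool => c n) ⁻¹' {true},
    isOpen_biUnion fun n _ => (isOpen_discrete _).preimage (continuous_apply n), ?_⟩
  ext x
  simp only [mem_preimage, mem_iUnion, mem_ofPred_eq, mem_singleton_iff, ← mem_iff_boolIndicator,
    exists_prop]
  refine ⟨fun ⟨n, hn, hx⟩ => hn hx, fun hx => ?_⟩
  obtain ⟨_, ⟨n, rfl⟩, hxn, hn⟩ := hW.exists_subset_of_mem_open hx hO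
  exact ⟨n, hn, hxn⟩

end ZeroDimensional

section Wadge

variable {Z : Type*} [TopologicalSpace Z] {η ξ : Ordinal}

theorem exists_diffClass_eq_setOf_wadgeLE {e : Z → ℕ → Bool} (he : IsInducing e)
    {j : (ℕ → Bool) × (ℕ → Bool) → Z} (hj : IsInducing j)
    {U : Set ((ℕ → Bool) × (ℕ → Bool))} (hU : U ∈ DiffClass η ξ _)
    (hUuniv : DiffClass η ξ (ℕ → Bool) ⊆ sections U) :
    ∃ A : Set Z, DiffClass η ξ Z = {B | WadgeLE B A} := by
  obtain ⟨A, hA, hjA⟩ := hj.exists_preimage_eq_of_mem_diffClass hU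
  refine ⟨A, Set.ext fun B => ⟨fun hB => ?_, ?_⟩⟩
  · obtain ⟨B', hB', rfl⟩ := he.exists_preimage_eq_of_mem_diffClass hB
    obtain ⟨c, rfl⟩ := hUuniv hB'
    exact ⟨fun z => j (c, e z), hj.continuous.comp (by fun_prop), by rw [← hjA]; rfl⟩
  · rintro ⟨f, hf, rfl⟩
    exact preimage_mem_diffClass hf hA

theorem diffClass_ne_image_compl {ι : (ℕ → Bool) → Z} (hι : IsInducing ι)
    {U : Set ((ℕ → Bool) × (ℕ → Bool))} (hU : U ∈ DiffClass η ξ _)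
    (hUuniv : DiffClass η ξ (ℕ → Bool) ⊆ sections U) :
    DiffClass η ξ Z ≠ (fun A => Aᶜ) '' DiffClass η ξ Z := by
  intro hsd
  have hD : {x | (x, x) ∈ U} ∈ DiffClass η ξ (ℕ → Bool) :=
    preimage_mem_diffClass (continuous_id.prodMk continuous_id) hU
  obtain ⟨T, hT, hιT⟩ := hι.exists_preimage_eq_of_mem_diffClass hD
  rw [hsd] at hT
  obtain ⟨T₀, hT₀, rfl⟩ := hT
  refine compl_diagonal_notMem_sections U (hUuniv ?_)
  rw [← hιT, preimage_compl, compl_compl]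
  exact preimage_mem_diffClass hι.continuous hT₀

end Wadge

theorem statement14_general (Z : Type) [TopologicalSpace Z] [PolishSpace Z] [Uncountable Z]
    (hzd : ∃ B : Set (Set Z), TopologicalSpace.IsTopologicalBasis B ∧ ∀ U ∈ B, IsClopen U)
    (η ξ : Ordinal) (hη : η < (Cardinal.aleph 1).ord)
    (hξ : ξ < (Cardinal.aleph 1).ord) :
    (∃ A : Set Z, DiffClass η ξ Z = {B | WadgeLE B A}) ∧
    DiffClass η ξ Z ≠ (fun A => Aᶜ) '' DiffClass η ξ Z := by
  obtain ⟨ι, -, hιc, hιi⟩ :=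
    isClosed_univ.exists_nat_bool_injection_of_not_countable (α := Z) not_countable_univ
  have hι : IsInducing ι := (hιc.isClosedEmbedding hιi).isInducing
  obtain ⟨W, hWc, hW⟩ := exists_seq_isClopen_basis hzd
  obtain ⟨W', hW'⟩ := exists_seq_basis (ℕ → Bool)
  obtain ⟨V, hV, hVuniv⟩ := exists_universal_sigmaClass hW' ξ hξ
  obtain ⟨U, hU, hUuniv⟩ := exists_universal_diffClass (X := ℕ → Bool) hη hV hVuniv
  have hj : IsInducing (ι ∘ (Homeomorph.sumArrowHomeomorphProdArrow.symm.trans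
      (Homeomorph.piCongrLeft (Y := fun _ => Bool) Equiv.natSumNatEquivNat))) :=
    hι.comp (Homeomorph.isInducing _)
  exact ⟨exists_diffClass_eq_setOf_wadgeLE (isInducing_boolIndicator hWc hW) hj hU hUuniv,
    diffClass_ne_image_compl hι hU hUuniv⟩

/-- For an uncountable zero-dimensional Polish space `Z` and `1 ≤ η, ξ < ω₁`, the class
`D_η(Σ⁰_ξ(Z))` is a non-selfdual Wadge class in `Z`. -/
theorem statement14 (Z : Type) [TopologicalSpace Z] [PolishSpace Z] [Uncountable Z]
    (hne : Nonempty Z)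
    (hzd : ∃ B : Set (Set Z), TopologicalSpace.IsTopologicalBasis B ∧ ∀ U ∈ B, IsClopen U)
    (η ξ : Ordinal) (hη1 : 1 ≤ η) (hη : η < (Cardinal.aleph 1).ord)
    (hξ1 : 1 ≤ ξ) (hξ : ξ < (Cardinal.aleph 1).ord) :
    (∃ A : Set Z, DiffClass η ξ Z = {B | WadgeLE B A}) ∧
    DiffClass η ξ Z ≠ (fun A => Aᶜ) '' DiffClass η ξ Z :=
  statement14_general Z hzd η ξ hη hξ
end
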